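/- arXiv:2512.08177 — 5 statements merged into one kernel-verified Lean document; each statement's English description precedes it below -/
import Mathlib

section
/- Let q : Θ → [0, q̄] be weakly decreasing. The following three statements are equivalent: (1) V̲(q(θ)) − θ·q(θ) − ∫_θ^{θ̄} q(y) dy ≥ G* for all θ ∈ Θ; (2) ∫_θ^{θ̄} q(y) dy ≤ ∫_θ^{θ̄} D̲(y) dy − ∫_θ^{P̲(q(θ))} (D̲(y) − q(θ)) dy for all θ ∈ Θ, where the last integral is signed (oriented) when P̲(q(θ)) < θ; (3) the inequality in (2) holds at θ = θ̲ and at θ = θ̄, and ∫_θ^{θ̄} q(y) dy ≤ ∫_θ^{θ̄} D̲(y) dy for all θ ∈ (θ̲, θ̄). -/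
open MeasureTheory Set

noncomputable section

/-- The base environment: type space `Θ = [θl, θu]`, capacity `qbar`, lowest inverse
demand `Pl = P̲` (decreasing and continuous on `[0, qbar]` with `Pl 0 > θu`) and the
induced lowest demand `Dl = D̲`, with `Dl θl < qbar`. -/
structure Env where
  θl : ℝ
  θu : ℝ
  qbar : ℝ
  Pl : ℝ → ℝ
  Dl : ℝ → ℝ
  θl_pos : 0 < θl
  θlu : θl < θu
  qbar_pos : 0 < qbar
  Pl_anti : StrictAntiOn Pl (Icc 0 qbar)
  Pl_cont : ContinuousOn Pl (Icc 0 qbar)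
  Pl0 : θu < Pl 0
  Dl_inv : ∀ p, Pl qbar ≤ p → p ≤ Pl 0 → Dl p ∈ Icc (0:ℝ) qbar ∧ Pl (Dl p) = p
  Dl_high : ∀ p, Pl 0 < p → Dl p = 0
  Dl_low : ∀ p, p < Pl qbar → Dl p = qbar
  Dl_lt : Dl θl < qbar

namespace Env

/-- The type space `Θ = [θl, θu]`. -/
def Θ (E : Env) : Set ℝ := Icc E.θl E.θu

/-- The lowest gross value function `V̲ (x) = ∫_0^x P̲`. -/
def Vl (E : Env) (x : ℝ) : ℝ := ∫ s in (0:ℝ)..x, E.Pl s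

/-- `q_ℓ = D̲(θu)`: the efficient quantity at the lowest demand and highest cost. -/
def ql (E : Env) : ℝ := E.Dl E.θu

/-- `G* = V̲(q_ℓ) − θu · q_ℓ`: the maximal attainable guarantee. -/
def Gstar (E : Env) : ℝ := E.Vl E.ql - E.θu * E.ql

/-- A feasible quantity schedule: weakly decreasing on `Θ`, valued in `[0, qbar]`. -/
def IsSchedule (E : Env) (q : ℝ → ℝ) : Prop :=
  AntitoneOn q E.Θ ∧ ∀ θ ∈ E.Θ, q θ ∈ Icc (0:ℝ) E.qbar

/-- `W̲(θ, q) = V̲(q(θ)) − θ q(θ) − ∫_θ^{θu} q`: ex-post welfare at the lowest demand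
with zero rent for the highest type. -/
def Wl (E : Env) (q : ℝ → ℝ) (θ : ℝ) : ℝ :=
  E.Vl (q θ) - θ * q θ - ∫ y in θ..E.θu, q y

/-- An IC and IR (direct) quantity mechanism `(q, u)`. -/
def IsMech (E : Env) (q u : ℝ → ℝ) : Prop :=
  E.IsSchedule q ∧ 0 ≤ u E.θu ∧
    ∀ θ ∈ E.Θ, u θ = u E.θu + ∫ y in θ..E.θu, q y

/-- The set `𝒱` of admissible gross value functions: integrals of decreasing continuous
inverse demands dominating `P̲` pointwise. -/
def IsValue (E : Env) (V : ℝ → ℝ) : Prop :=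
  ∃ P : ℝ → ℝ, StrictAntiOn P (Icc 0 E.qbar) ∧ ContinuousOn P (Icc 0 E.qbar) ∧
    (∀ s ∈ Icc (0:ℝ) E.qbar, E.Pl s ≤ P s) ∧ ∀ x, V x = ∫ s in (0:ℝ)..x, P s

/-- A Borel probability measure supported in `Θ` (the measure of a cdf `F ∈ 𝒻`). -/
def IsTech (E : Env) (μ : Measure ℝ) : Prop :=
  IsProbabilityMeasure μ ∧ μ (E.Θᶜ) = 0

/-- Ex-ante welfare `W(M; V, F)` of the mechanism `(q, u)` under value `V` and
cost technology `μ`. -/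
def W (E : Env) (q u V : ℝ → ℝ) (μ : Measure ℝ) : ℝ :=
  ∫ θ, (V (q θ) - θ * q θ - u θ) ∂μ

/-- The welfare guarantee `G(M) = inf_{V ∈ 𝒱, F ∈ 𝒻} W(M; V, F)`. -/
def G (E : Env) (q u : ℝ → ℝ) : ℝ :=
  sInf {w : ℝ | ∃ (V : ℝ → ℝ) (μ : Measure ℝ),
    E.IsValue V ∧ E.IsTech μ ∧ w = E.W q u V μ}

/-- The short list: IC and IR mechanisms with the highest guarantee. -/
def ShortList (E : Env) (q u : ℝ → ℝ) : Prop :=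
  E.IsMech q u ∧ ∀ q' u' : ℝ → ℝ, E.IsMech q' u' → E.G q' u' ≤ E.G q u

/-- Feasibility in the program (ROPT): a schedule satisfying all robustness
constraints `W̲(θ, q) ≥ G*`. -/
def FeasibleROPT (E : Env) (q : ℝ → ℝ) : Prop :=
  E.IsSchedule q ∧ ∀ θ ∈ E.Θ, E.Gstar ≤ E.Wl q θ

end Env

/-- A demand `D ∈ 𝒟`, bundled with the inverse demand `P` that induces it:
`P` decreasing and continuous on `[0, qbar]`, `P ≥ P̲` pointwise, `P 0 > θu`. -/
structure Demand (E : Env) where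
  P : ℝ → ℝ
  D : ℝ → ℝ
  P_anti : StrictAntiOn P (Icc 0 E.qbar)
  P_cont : ContinuousOn P (Icc 0 E.qbar)
  P_ge : ∀ s ∈ Icc (0:ℝ) E.qbar, E.Pl s ≤ P s
  P0 : E.θu < P 0
  D_inv : ∀ p, P E.qbar ≤ p → p ≤ P 0 → D p ∈ Icc (0:ℝ) E.qbar ∧ P (D p) = p
  D_high : ∀ p, P 0 < p → D p = 0
  D_low : ∀ p, p < P E.qbar → D p = E.qbar
  D_lt : D E.θl < E.qbar

namespace Demand

/-- The gross value function `V_D(x) = ∫_0^x P` induced by a demand `D ∈ 𝒟`. -/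
def V {E : Env} (D : Demand E) (x : ℝ) : ℝ := ∫ s in (0:ℝ)..x, D.P s

end Demand

namespace Env

/-- The lowest demand `D̲` as an element of `𝒟`. -/
def DlDemand (E : Env) : Demand E where
  P := E.Pl
  D := E.Dl
  P_anti := E.Pl_anti
  P_cont := E.Pl_cont
  P_ge := fun _ _ => le_refl _
  P0 := E.Pl0
  D_inv := E.Dl_inv
  D_high := E.Dl_high
  D_low := E.Dl_low
  D_lt := E.Dl_lt

/-- A price regulation `(p, t)`: nonnegative prices and transfers. -/
def IsPriceReg (E : Env) (p : ℝ → ℝ) (t : ℝ → Demand E → ℝ) : Prop :=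
  (∀ θ ∈ E.Θ, 0 ≤ p θ) ∧ ∀ θ ∈ E.Θ, ∀ D : Demand E, 0 ≤ t θ D

/-- The rent `ũ(θ, D) = t(θ, D) − θ · D(p(θ))` of the monopolist. -/
def rent (E : Env) (p : ℝ → ℝ) (t : ℝ → Demand E → ℝ) (θ : ℝ) (D : Demand E) : ℝ :=
  t θ D - θ * D.D (p θ)

/-- Ex-post incentive compatibility of a price regulation. -/
def EPIC (E : Env) (p : ℝ → ℝ) (t : ℝ → Demand E → ℝ) : Prop :=
  ∀ θ ∈ E.Θ, ∀ θ' ∈ E.Θ, ∀ D : Demand E,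
    t θ' D - θ * D.D (p θ') ≤ E.rent p t θ D

/-- Ex-post individual rationality of a price regulation. -/
def EPIR (E : Env) (p : ℝ → ℝ) (t : ℝ → Demand E → ℝ) : Prop :=
  ∀ θ ∈ E.Θ, ∀ D : Demand E, 0 ≤ E.rent p t θ D

/-- Ex-post welfare `w̃(θ; D) = V_D(D(p(θ))) − θ·D(p(θ)) − ũ(θ, D)`. -/
def wt (E : Env) (p : ℝ → ℝ) (t : ℝ → Demand E → ℝ) (θ : ℝ) (D : Demand E) : ℝ :=
  D.V (D.D (p θ)) - θ * D.D (p θ) - E.rent p t θ D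

/-- Ex-ante welfare `W̃((p,t); D, F)` of a price regulation. -/
def Wt (E : Env) (p : ℝ → ℝ) (t : ℝ → Demand E → ℝ) (D : Demand E) (μ : Measure ℝ) : ℝ :=
  ∫ θ, E.wt p t θ D ∂μ

/-- The welfare guarantee `G̃((p,t)) = inf_{D ∈ 𝒟, F ∈ 𝒻} W̃((p,t); D, F)`. -/
def Gt (E : Env) (p : ℝ → ℝ) (t : ℝ → Demand E → ℝ) : ℝ :=
  sInf {w : ℝ | ∃ (D : Demand E) (μ : Measure ℝ), E.IsTech μ ∧ w = E.Wt p t D μ}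

/-- An EPIC and EPIR price regulation. -/
def IsAdmissiblePR (E : Env) (p : ℝ → ℝ) (t : ℝ → Demand E → ℝ) : Prop :=
  E.IsPriceReg p t ∧ E.EPIC p t ∧ E.EPIR p t

/-- The price short list: EPIC and EPIR price regulations with the highest guarantee. -/
def PriceShortList (E : Env) (p : ℝ → ℝ) (t : ℝ → Demand E → ℝ) : Prop :=
  E.IsAdmissiblePR p t ∧
    ∀ (p' : ℝ → ℝ) (t' : ℝ → Demand E → ℝ), E.IsAdmissiblePR p' t' → E.Gt p' t' ≤ E.Gt p t

end Env

/-- The conjectured model: a regular cdf `F*` with density `f*` on `Θ`, and a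
conjectured inverse demand `P*` (with induced demand `D*`) dominating `P̲`. -/
structure Model (E : Env) where
  Fstar : ℝ → ℝ
  fstar : ℝ → ℝ
  Pstar : ℝ → ℝ
  Dstar : ℝ → ℝ
  fstar_pos : ∀ θ ∈ E.Θ, 0 < fstar θ
  Fstar_ac : ∀ θ ∈ E.Θ, Fstar θ = ∫ y in E.θl..θ, fstar y
  Fstar_l : Fstar E.θl = 0
  Fstar_u : Fstar E.θu = 1
  zstar_cont : ContinuousOn (fun θ => θ + Fstar θ / fstar θ) E.Θ
  zstar_mono : StrictMonoOn (fun θ => θ + Fstar θ / fstar θ) E.Θ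
  Pstar_anti : StrictAntiOn Pstar (Icc 0 E.qbar)
  Pstar_cont : ContinuousOn Pstar (Icc 0 E.qbar)
  Pstar_ge : ∀ s ∈ Icc (0:ℝ) E.qbar, E.Pl s ≤ Pstar s
  Pstar0 : E.θu < Pstar 0
  Dstar_inv : ∀ p, Pstar E.qbar ≤ p → p ≤ Pstar 0 →
    Dstar p ∈ Icc (0:ℝ) E.qbar ∧ Pstar (Dstar p) = p
  Dstar_high : ∀ p, Pstar 0 < p → Dstar p = 0
  Dstar_low : ∀ p, p < Pstar E.qbar → Dstar p = E.qbar
  Dstar_lt : Dstar E.θl < E.qbar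

namespace Model

variable {E : Env} (Mo : Model E)

/-- The virtual cost `z*(θ) = θ + F*(θ)/f*(θ)`. -/
def zstar (θ : ℝ) : ℝ := θ + Mo.Fstar θ / Mo.fstar θ

/-- The conjectured gross value function `V*(x) = ∫_0^x P*`. -/
def Vstar (x : ℝ) : ℝ := ∫ s in (0:ℝ)..x, Mo.Pstar s

/-- The Baron–Myerson schedule `q^BM(θ) = D*(z*(θ))`. -/
def qBM (θ : ℝ) : ℝ := Mo.Dstar (Mo.zstar θ)

/-- The Baron–Myerson-with-quantity-floor schedule `q*(θ) = max{q^BM(θ), q_ℓ}`. -/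
def qstar (θ : ℝ) : ℝ := max (Mo.qBM θ) E.ql

/-- The objective of (ROPT): expected virtual surplus under the conjectured model. -/
def J (q : ℝ → ℝ) : ℝ :=
  ∫ θ in E.θl..E.θu, (Mo.Vstar (q θ) - Mo.zstar θ * q θ) * Mo.fstar θ

/-- `q` solves the program (ROPT). -/
def SolvesROPT (q : ℝ → ℝ) : Prop :=
  E.FeasibleROPT q ∧ ∀ q' : ℝ → ℝ, E.FeasibleROPT q' → Mo.J q' ≤ Mo.J q

/-- `θ*`: the unique solution of `q^BM(θ*) = q_ℓ` in `Θ` when `q^BM(θu) < q_ℓ`;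
otherwise `θ* = θu`. -/
def IsThetaStar (θs : ℝ) : Prop :=
  (Mo.qBM E.θu < E.ql ∧ θs ∈ E.Θ ∧ Mo.qBM θs = E.ql) ∨
    (E.ql ≤ Mo.qBM E.θu ∧ θs = E.θu)

/-- `θ^m`: the largest minimizer of `W̲(·, q*)` over `Θ`. -/
def IsThetaM (θm : ℝ) : Prop :=
  θm ∈ E.Θ ∧ (∀ θ' ∈ E.Θ, E.Wl Mo.qstar θm ≤ E.Wl Mo.qstar θ') ∧
    ∀ θ ∈ E.Θ, (∀ θ' ∈ E.Θ, E.Wl Mo.qstar θ ≤ E.Wl Mo.qstar θ') → θ ≤ θm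

/-- The conjectured demand `D*` as an element of `𝒟`. -/
def DstarDemand : Demand E where
  P := Mo.Pstar
  D := Mo.Dstar
  P_anti := Mo.Pstar_anti
  P_cont := Mo.Pstar_cont
  P_ge := Mo.Pstar_ge
  P0 := Mo.Pstar0
  D_inv := Mo.Dstar_inv
  D_high := Mo.Dstar_high
  D_low := Mo.Dstar_low
  D_lt := Mo.Dstar_lt

/-- Expected welfare `W((q,u); V*, F*)` of a quantity mechanism under the
conjectured model. -/
def WStar (q u : ℝ → ℝ) : ℝ :=
  ∫ θ in E.θl..E.θu, (Mo.Vstar (q θ) - θ * q θ - u θ) * Mo.fstar θ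

/-- Expected welfare `W̃((p,t); D*, F*)` of a price regulation under the
conjectured model. -/
def WtStar (p : ℝ → ℝ) (t : ℝ → Demand E → ℝ) : ℝ :=
  ∫ θ in E.θl..E.θu, E.wt p t θ Mo.DstarDemand * Mo.fstar θ

/-- A robustly optimal price regulation: in the price short list, and maximizing
expected welfare under the conjectured model over the price short list. -/
def RobustlyOptimalPR (p : ℝ → ℝ) (t : ℝ → Demand E → ℝ) : Prop :=
  E.PriceShortList p t ∧
    ∀ (p' : ℝ → ℝ) (t' : ℝ → Demand E → ℝ), E.PriceShortList p' t' →
      Mo.WtStar p' t' ≤ Mo.WtStar p t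

/-- A Baron–Myerson-with-price-cap regulation. -/
def IsBMPriceCap (p : ℝ → ℝ) (t : ℝ → Demand E → ℝ) : Prop :=
  E.IsAdmissiblePR p t ∧
  (∀ θ ∈ E.Θ, p θ = min (Mo.zstar θ) E.θu) ∧
  (∀ θ ∈ E.Θ, ∀ D : Demand E,
    E.rent p t θ D = E.rent p t E.θu D + ∫ y in θ..E.θu, D.D (p y)) ∧
  (∀ D : Demand E, D ≠ E.DlDemand → D ≠ Mo.DstarDemand →
    0 ≤ E.rent p t E.θu D ∧
      E.rent p t E.θu D ≤ D.V (D.D E.θu) - E.θu * D.D E.θu - E.Gstar) ∧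
  E.rent p t E.θu E.DlDemand = 0 ∧ E.rent p t E.θu Mo.DstarDemand = 0

end Model


namespace MajAux

open intervalIntegral

variable {E : Env}

/-- The price range `J = [P̲(q̄), P̲(0)]`. -/
def Jset (E : Env) : Set ℝ := Icc (E.Pl E.qbar) (E.Pl 0)

lemma mem_Θ {θ : ℝ} : θ ∈ E.Θ ↔ E.θl ≤ θ ∧ θ ≤ E.θu := Iff.rfl

lemma Pl_qbar_le_θl (E : Env) : E.Pl E.qbar ≤ E.θl := by
  by_contra h
  push_neg at h
  have h2 := E.Dl_low E.θl h
  exact absurd E.Dl_lt (by rw [h2]; exact lt_irrefl _)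

lemma θl_mem_J (E : Env) : E.θl ∈ Jset E :=
  ⟨Pl_qbar_le_θl E, le_of_lt (lt_trans E.θlu E.Pl0)⟩

lemma θu_mem_J (E : Env) : E.θu ∈ Jset E :=
  ⟨le_trans (Pl_qbar_le_θl E) (le_of_lt E.θlu), le_of_lt E.Pl0⟩

lemma Θ_subset_J (E : Env) : E.Θ ⊆ Jset E := fun θ hθ =>
  ⟨le_trans (θl_mem_J E).1 hθ.1, le_trans hθ.2 (θu_mem_J E).2⟩

lemma zero_mem (E : Env) : (0:ℝ) ∈ Icc (0:ℝ) E.qbar := ⟨le_refl _, le_of_lt E.qbar_pos⟩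

lemma qbar_mem (E : Env) : E.qbar ∈ Icc (0:ℝ) E.qbar := ⟨le_of_lt E.qbar_pos, le_refl _⟩

lemma Pl_mem_J {x : ℝ} (hx : x ∈ Icc (0:ℝ) E.qbar) : E.Pl x ∈ Jset E :=
  ⟨E.Pl_anti.antitoneOn hx (qbar_mem E) hx.2, E.Pl_anti.antitoneOn (zero_mem E) hx hx.1⟩

lemma Dl_spec {p : ℝ} (hp : p ∈ Jset E) :
    E.Dl p ∈ Icc (0:ℝ) E.qbar ∧ E.Pl (E.Dl p) = p := E.Dl_inv p hp.1 hp.2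

lemma Dl_Pl {x : ℝ} (hx : x ∈ Icc (0:ℝ) E.qbar) : E.Dl (E.Pl x) = x := by
  have h := Dl_spec (E := E) (Pl_mem_J hx)
  exact E.Pl_anti.injOn h.1 hx h.2

lemma Dl_anti (E : Env) : AntitoneOn E.Dl (Jset E) := by
  intro p hp p' hp' hle
  by_contra h
  push_neg at h
  have := E.Pl_anti (Dl_spec hp).1 (Dl_spec hp').1 h
  rw [(Dl_spec hp).2, (Dl_spec hp').2] at this
  exact absurd hle (not_le.mpr this)

lemma Dl_strictAnti (E : Env) : StrictAntiOn E.Dl (Jset E) := by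
  intro p hp p' hp' hlt
  have hle := Dl_anti E hp hp' (le_of_lt hlt)
  rcases lt_or_eq_of_le hle with h | h
  · exact h
  · exfalso
    have := congrArg E.Pl h
    rw [(Dl_spec hp).2, (Dl_spec hp').2] at this
    exact absurd this (ne_of_gt hlt)

lemma le_Dl_iff {s p : ℝ} (hs : s ∈ Icc (0:ℝ) E.qbar) (hp : p ∈ Jset E) :
    s ≤ E.Dl p ↔ p ≤ E.Pl s := by
  constructor
  · intro h
    have := E.Pl_anti.antitoneOn hs (Dl_spec hp).1 h
    rwa [(Dl_spec hp).2] at this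
  · intro h
    have := Dl_anti E hp (Pl_mem_J hs) h
    rwa [Dl_Pl hs] at this

lemma intDl {a b : ℝ} (ha : a ∈ Jset E) (hb : b ∈ Jset E) :
    IntervalIntegrable E.Dl volume a b :=
  AntitoneOn.intervalIntegrable ((Dl_anti E).mono (uIcc_subset_Icc ha hb))

lemma intPl {a b : ℝ} (ha : a ∈ Icc (0:ℝ) E.qbar) (hb : b ∈ Icc (0:ℝ) E.qbar) :
    IntervalIntegrable E.Pl volume a b :=
  ContinuousOn.intervalIntegrable (E.Pl_cont.mono (uIcc_subset_Icc ha hb))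

lemma intq {q : ℝ → ℝ} (hq : E.IsSchedule q) {a b : ℝ} (ha : a ∈ E.Θ) (hb : b ∈ E.Θ) :
    IntervalIntegrable q volume a b :=
  AntitoneOn.intervalIntegrable (hq.1.mono (uIcc_subset_Icc ha hb))

lemma ql_mem (E : Env) : E.ql ∈ Icc (0:ℝ) E.qbar := (Dl_spec (θu_mem_J E)).1

lemma Pl_ql (E : Env) : E.Pl E.ql = E.θu := (Dl_spec (θu_mem_J E)).2

end MajAux

namespace MajAux

open intervalIntegral

variable {E : Env}

lemma young_le (E : Env) {x₁ x₂ : ℝ} (h₁ : x₁ ∈ Icc (0:ℝ) E.qbar)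
    (h₂ : x₂ ∈ Icc (0:ℝ) E.qbar) (hle : x₁ ≤ x₂) :
    ∫ y in (E.Pl x₂)..(E.Pl x₁), E.Dl y
      = (∫ s in x₁..x₂, E.Pl s) - x₂ * E.Pl x₂ + x₁ * E.Pl x₁ := by
  set a := E.Pl x₂ with ha_def
  set b := E.Pl x₁ with hb_def
  have hab : a ≤ b := E.Pl_anti.antitoneOn h₁ h₂ hle
  have haJ : a ∈ Jset E := Pl_mem_J h₂
  have hbJ : b ∈ Jset E := Pl_mem_J h₁
  have hIocJ : Ioc a b ⊆ Jset E := fun y hy => ⟨le_trans haJ.1 (le_of_lt hy.1), le_trans hy.2 hbJ.2⟩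
  have hIocQ : Ioc x₁ x₂ ⊆ Icc (0:ℝ) E.qbar :=
    fun s hs => ⟨le_trans h₁.1 (le_of_lt hs.1), le_trans hs.2 h₂.2⟩
  set F : ℝ → ℝ → ℝ := fun y s => if 0 ≤ E.Pl s - y then (1:ℝ) else 0 with hF_def
  haveI hfin1 : IsFiniteMeasure (volume.restrict (Ioc a b)) :=
    ⟨by rw [Measure.restrict_apply_univ]; exact measure_Ioc_lt_top⟩
  haveI hfin2 : IsFiniteMeasure (volume.restrict (Ioc x₁ x₂)) :=
    ⟨by rw [Measure.restrict_apply_univ]; exact measure_Ioc_lt_top⟩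
  have hg_cont : ContinuousOn (fun p : ℝ × ℝ => E.Pl p.2 - p.1)
      ((univ : Set ℝ) ×ˢ Icc (0:ℝ) E.qbar) := by
    apply ContinuousOn.sub
    · exact E.Pl_cont.comp continuous_snd.continuousOn (fun p hp => hp.2)
    · exact continuous_fst.continuousOn
  have hg_meas : AEMeasurable (fun p : ℝ × ℝ => E.Pl p.2 - p.1)
      ((volume.restrict (Ioc a b)).prod (volume.restrict (Ioc x₁ x₂))) := by
    rw [Measure.prod_restrict]
    have h1 : AEMeasurable (fun p : ℝ × ℝ => E.Pl p.2 - p.1)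
        ((volume.prod volume).restrict ((univ : Set ℝ) ×ˢ Icc (0:ℝ) E.qbar)) :=
      hg_cont.aemeasurable (MeasurableSet.univ.prod measurableSet_Icc)
    exact h1.mono_measure (Measure.restrict_mono (Set.prod_mono (subset_univ _) hIocQ) le_rfl)
  have houter : Measurable (fun t : ℝ => if 0 ≤ t then (1:ℝ) else 0) :=
    measurable_const.ite measurableSet_Ici measurable_const
  have hF_meas : AEStronglyMeasurable (Function.uncurry F)
      ((volume.restrict (Ioc a b)).prod (volume.restrict (Ioc x₁ x₂))) :=
    (houter.comp_aemeasurable hg_meas).aestronglyMeasurable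
  have hF_int : MeasureTheory.Integrable (Function.uncurry F)
      ((volume.restrict (Ioc a b)).prod (volume.restrict (Ioc x₁ x₂))) := by
    apply MeasureTheory.Integrable.mono' (g := fun _ => (1:ℝ)) (integrable_const 1) hF_meas
    apply Filter.Eventually.of_forall
    intro p
    simp only [Function.uncurry, hF_def]
    split_ifs <;> simp
  have hswap := MeasureTheory.integral_integral_swap hF_int
  have inner1 : ∀ y ∈ Ioc a b, (∫ s in Ioc x₁ x₂, F y s) = E.Dl y - x₁ := by
    intro y hy
    have hyJ : y ∈ Jset E := hIocJ hy
    have hDy1 : x₁ ≤ E.Dl y := by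
      have h := Dl_anti E hyJ hbJ hy.2
      rwa [hb_def, Dl_Pl h₁] at h
    have hDy2 : E.Dl y ≤ x₂ := by
      have h := Dl_anti E haJ hyJ (le_of_lt hy.1)
      rwa [ha_def, Dl_Pl h₂] at h
    have hcong : EqOn (F y) (Set.indicator (Iic (E.Dl y)) (fun _ => (1:ℝ))) (Ioc x₁ x₂) := by
      intro s hs
      have hiff : (0 ≤ E.Pl s - y) ↔ s ≤ E.Dl y := by
        rw [sub_nonneg]
        exact (le_Dl_iff (hIocQ hs) hyJ).symm
      simp only [hF_def, Set.indicator_apply, mem_Iic]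
      rw [if_congr hiff rfl rfl]
    rw [setIntegral_congr_fun measurableSet_Ioc hcong,
      setIntegral_indicator measurableSet_Iic, Set.Ioc_inter_Iic,
      min_eq_right hDy2, setIntegral_const, Real.volume_real_Ioc_of_le hDy1, smul_eq_mul, mul_one]
  have inner2 : ∀ s ∈ Ioc x₁ x₂, (∫ y in Ioc a b, F y s) = E.Pl s - a := by
    intro s hs
    have hsQ : s ∈ Icc (0:ℝ) E.qbar := hIocQ hs
    have hPs1 : a ≤ E.Pl s := E.Pl_anti.antitoneOn hsQ h₂ hs.2
    have hPs2 : E.Pl s ≤ b := E.Pl_anti.antitoneOn h₁ hsQ (le_of_lt hs.1)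
    have hcong : EqOn (fun y => F y s) (Set.indicator (Iic (E.Pl s)) (fun _ => (1:ℝ)))
        (Ioc a b) := by
      intro y _
      have hiff : (0 ≤ E.Pl s - y) ↔ y ≤ E.Pl s := sub_nonneg
      simp only [hF_def, Set.indicator_apply, mem_Iic]
      rw [if_congr hiff rfl rfl]
    rw [setIntegral_congr_fun measurableSet_Ioc hcong,
      setIntegral_indicator measurableSet_Iic, Set.Ioc_inter_Iic,
      min_eq_right hPs2, setIntegral_const, Real.volume_real_Ioc_of_le hPs1, smul_eq_mul, mul_one]
  have step1 : ∫ y in Ioc a b, (E.Dl y - x₁) = ∫ s in Ioc x₁ x₂, (E.Pl s - a) := by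
    calc ∫ y in Ioc a b, (E.Dl y - x₁)
        = ∫ y in Ioc a b, ∫ s in Ioc x₁ x₂, F y s :=
          (setIntegral_congr_fun measurableSet_Ioc (fun y hy => inner1 y hy)).symm
      _ = ∫ s in Ioc x₁ x₂, ∫ y in Ioc a b, F y s := hswap
      _ = ∫ s in Ioc x₁ x₂, (E.Pl s - a) :=
          setIntegral_congr_fun measurableSet_Ioc (fun s hs => inner2 s hs)
  have e1 : ∫ y in a..b, (E.Dl y - x₁) = ∫ y in Ioc a b, (E.Dl y - x₁) :=
    integral_of_le hab
  have e2 : ∫ s in x₁..x₂, (E.Pl s - a) = ∫ s in Ioc x₁ x₂, (E.Pl s - a) :=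
    integral_of_le hle
  have e3 : ∫ y in a..b, (E.Dl y - x₁) = (∫ y in a..b, E.Dl y) - (b - a) * x₁ := by
    rw [integral_sub (intDl haJ hbJ) intervalIntegrable_const, intervalIntegral.integral_const, smul_eq_mul]
  have e4 : ∫ s in x₁..x₂, (E.Pl s - a) = (∫ s in x₁..x₂, E.Pl s) - (x₂ - x₁) * a := by
    rw [integral_sub (intPl h₁ h₂) intervalIntegrable_const, intervalIntegral.integral_const, smul_eq_mul]
  have key : (∫ y in a..b, E.Dl y) - (b - a) * x₁
      = (∫ s in x₁..x₂, E.Pl s) - (x₂ - x₁) * a := by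
    rw [← e3, ← e4, e1, e2, step1]
  linear_combination key

lemma young (E : Env) {x₁ x₂ : ℝ} (h₁ : x₁ ∈ Icc (0:ℝ) E.qbar)
    (h₂ : x₂ ∈ Icc (0:ℝ) E.qbar) :
    ∫ y in (E.Pl x₂)..(E.Pl x₁), E.Dl y
      = (∫ s in x₁..x₂, E.Pl s) - x₂ * E.Pl x₂ + x₁ * E.Pl x₁ := by
  rcases le_total x₁ x₂ with h | h
  · exact young_le E h₁ h₂ h
  · have h' := young_le E h₂ h₁ h
    have s1 : ∫ y in (E.Pl x₂)..(E.Pl x₁), E.Dl y = -∫ y in (E.Pl x₁)..(E.Pl x₂), E.Dl y :=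
      integral_symm _ _
    have s2 : ∫ s in x₁..x₂, E.Pl s = -∫ s in x₂..x₁, E.Pl s := integral_symm _ _
    rw [s1, s2, h']
    ring

end MajAux

namespace MajAux

open intervalIntegral

variable {E : Env}

/-- The slack function `M(θ)`. -/
def Mfun (E : Env) (q : ℝ → ℝ) (θ : ℝ) : ℝ :=
  (∫ y in (E.Pl (q θ))..E.θu, E.Dl y) + (E.Pl (q θ) - θ) * q θ - ∫ y in θ..E.θu, q y

lemma θl_mem_Θ (E : Env) : E.θl ∈ E.Θ := ⟨le_refl _, le_of_lt E.θlu⟩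

lemma θu_mem_Θ (E : Env) : E.θu ∈ E.Θ := ⟨le_of_lt E.θlu, le_refl _⟩

lemma lemA {q : ℝ → ℝ} (hq : E.IsSchedule q) {θ : ℝ} (hθ : θ ∈ E.Θ) :
    E.Wl q θ - E.Gstar = Mfun E q θ := by
  have hx : q θ ∈ Icc (0:ℝ) E.qbar := hq.2 θ hθ
  have hy := young E hx (ql_mem E)
  rw [Pl_ql] at hy
  have hV : (∫ s in (0:ℝ)..(q θ), E.Pl s) + ∫ s in (q θ)..E.ql, E.Pl s
      = ∫ s in (0:ℝ)..E.ql, E.Pl s :=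
    integral_add_adjacent_intervals (intPl (zero_mem E) hx) (intPl hx (ql_mem E))
  have hsym : ∫ y in (E.Pl (q θ))..E.θu, E.Dl y = -∫ y in E.θu..(E.Pl (q θ)), E.Dl y :=
    integral_symm _ _
  simp only [Env.Wl, Env.Gstar, Env.Vl, Mfun]
  rw [hsym, hy]
  linear_combination hV

lemma lemB {q : ℝ → ℝ} (hq : E.IsSchedule q) {θ : ℝ} (hθ : θ ∈ E.Θ) :
    ((∫ y in θ..E.θu, E.Dl y) - ∫ y in θ..(E.Pl (q θ)), (E.Dl y - q θ))
      - (∫ y in θ..E.θu, q y) = Mfun E q θ := by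
  have hx : q θ ∈ Icc (0:ℝ) E.qbar := hq.2 θ hθ
  have hθJ : θ ∈ Jset E := Θ_subset_J E hθ
  have hβJ : E.Pl (q θ) ∈ Jset E := Pl_mem_J hx
  have hD : ∫ y in θ..(E.Pl (q θ)), (E.Dl y - q θ)
      = (∫ y in θ..(E.Pl (q θ)), E.Dl y) - (E.Pl (q θ) - θ) * q θ := by
    rw [integral_sub (intDl hθJ hβJ) intervalIntegrable_const,
      intervalIntegral.integral_const, smul_eq_mul]
  have hadd : (∫ y in θ..(E.Pl (q θ)), E.Dl y) + ∫ y in (E.Pl (q θ))..E.θu, E.Dl y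
      = ∫ y in θ..E.θu, E.Dl y :=
    integral_add_adjacent_intervals (intDl hθJ hβJ) (intDl hβJ (θu_mem_J E))
  simp only [Mfun]
  rw [hD]
  linear_combination -hadd

lemma int_nonpos {f : ℝ → ℝ} {a b : ℝ} (hab : a ≤ b) (h : ∀ y ∈ Icc a b, f y ≤ 0) :
    ∫ y in a..b, f y ≤ 0 := by
  have h0 : (0:ℝ) ≤ ∫ y in a..b, -f y :=
    integral_nonneg hab (fun u hu => by linarith [h u hu])
  rw [intervalIntegral.integral_neg] at h0
  linarith

lemma dwl_nonneg {x θ : ℝ} (hx : x ∈ Icc (0:ℝ) E.qbar) (hθ : θ ∈ Jset E) :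
    0 ≤ ∫ y in θ..(E.Pl x), (E.Dl y - x) := by
  have hβJ : E.Pl x ∈ Jset E := Pl_mem_J hx
  rcases le_total θ (E.Pl x) with h | h
  · apply integral_nonneg h
    intro y hy
    have hyJ : y ∈ Jset E := ⟨le_trans hθ.1 hy.1, le_trans hy.2 hβJ.2⟩
    have hle : x ≤ E.Dl y := by
      have := Dl_anti E hyJ hβJ hy.2
      rwa [Dl_Pl hx] at this
    linarith
  · rw [integral_symm (E.Pl x) θ]
    have hle : ∫ y in (E.Pl x)..θ, (E.Dl y - x) ≤ 0 := by
      apply int_nonpos h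
      intro y hy
      have hyJ : y ∈ Jset E := ⟨le_trans hβJ.1 hy.1, le_trans hy.2 hθ.2⟩
      have := Dl_anti E hβJ hyJ hy.1
      rw [Dl_Pl hx] at this
      linarith
    linarith

lemma dwl_pos {x : ℝ} (hx : x ∈ Icc (0:ℝ) E.qbar) (hne : x ≠ E.ql) :
    0 < ∫ y in E.θu..(E.Pl x), (E.Dl y - x) := by
  have hβJ : E.Pl x ∈ Jset E := Pl_mem_J hx
  have hθuJ : E.θu ∈ Jset E := θu_mem_J E
  have hβne : E.Pl x ≠ E.θu := by
    intro h
    apply hne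
    have := congrArg E.Dl h
    rw [Dl_Pl hx] at this
    exact this
  have hint : ∀ a b : ℝ, a ∈ Jset E → b ∈ Jset E →
      IntervalIntegrable (fun y => E.Dl y - x) volume a b :=
    fun a b ha hb => (intDl ha hb).sub intervalIntegrable_const
  rcases lt_or_gt_of_ne hβne with h | h
  · -- Pl x < θu, so ql < x
    set c := (E.Pl x + E.θu) / 2 with hc_def
    have hc1 : E.Pl x < c := by simp [hc_def]; linarith
    have hc2 : c < E.θu := by simp [hc_def]; linarith
    have hcJ : c ∈ Jset E := ⟨le_trans hβJ.1 (le_of_lt hc1), le_trans (le_of_lt hc2) hθuJ.2⟩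
    have hDc : E.Dl c < x := by
      have := Dl_strictAnti E hβJ hcJ hc1
      rwa [Dl_Pl hx] at this
    have hsplit : (∫ y in (E.Pl x)..c, (E.Dl y - x)) + ∫ y in c..E.θu, (E.Dl y - x)
        = ∫ y in (E.Pl x)..E.θu, (E.Dl y - x) :=
      integral_add_adjacent_intervals (hint _ _ hβJ hcJ) (hint _ _ hcJ hθuJ)
    have h1 : ∫ y in (E.Pl x)..c, (E.Dl y - x) ≤ 0 := by
      apply int_nonpos (le_of_lt hc1)
      intro y hy
      have hyJ : y ∈ Jset E := ⟨le_trans hβJ.1 hy.1, le_trans hy.2 hcJ.2⟩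
      have := Dl_anti E hβJ hyJ hy.1
      rw [Dl_Pl hx] at this
      linarith
    have h2 : ∫ y in c..E.θu, (E.Dl y - x) ≤ (E.θu - c) * (E.Dl c - x) := by
      have := integral_mono_on (le_of_lt hc2) (hint _ _ hcJ hθuJ)
        (_root_.intervalIntegrable_const (c := E.Dl c - x))
        (fun y hy => by
          have hyJ : y ∈ Jset E := ⟨le_trans hcJ.1 hy.1, le_trans hy.2 hθuJ.2⟩
          have := Dl_anti E hcJ hyJ hy.1
          linarith)
      rwa [intervalIntegral.integral_const, smul_eq_mul] at this
    have h3 : (E.θu - c) * (E.Dl c - x) < 0 :=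
      mul_neg_of_pos_of_neg (by linarith) (by linarith)
    rw [integral_symm (E.Pl x) E.θu]
    linarith
  · -- θu < Pl x, so x < ql
    set c := (E.θu + E.Pl x) / 2 with hc_def
    have hc1 : E.θu < c := by simp [hc_def]; linarith
    have hc2 : c < E.Pl x := by simp [hc_def]; linarith
    have hcJ : c ∈ Jset E := ⟨le_trans hθuJ.1 (le_of_lt hc1), le_trans (le_of_lt hc2) hβJ.2⟩
    have hDc : x < E.Dl c := by
      have := Dl_strictAnti E hcJ hβJ hc2
      rwa [Dl_Pl hx] at this
    have hsplit : (∫ y in E.θu..c, (E.Dl y - x)) + ∫ y in c..(E.Pl x), (E.Dl y - x)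
        = ∫ y in E.θu..(E.Pl x), (E.Dl y - x) :=
      integral_add_adjacent_intervals (hint _ _ hθuJ hcJ) (hint _ _ hcJ hβJ)
    have h1 : (c - E.θu) * (E.Dl c - x) ≤ ∫ y in E.θu..c, (E.Dl y - x) := by
      have := integral_mono_on (le_of_lt hc1) (_root_.intervalIntegrable_const (c := E.Dl c - x))
        (hint _ _ hθuJ hcJ)
        (fun y hy => by
          have hyJ : y ∈ Jset E := ⟨le_trans hθuJ.1 hy.1, le_trans hy.2 hcJ.2⟩
          have := Dl_anti E hyJ hcJ hy.2
          linarith)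
      rwa [intervalIntegral.integral_const, smul_eq_mul] at this
    have h2 : 0 ≤ ∫ y in c..(E.Pl x), (E.Dl y - x) := by
      apply integral_nonneg (le_of_lt hc2)
      intro y hy
      have hyJ : y ∈ Jset E := ⟨le_trans hcJ.1 hy.1, le_trans hy.2 hβJ.2⟩
      have := Dl_anti E hyJ hβJ hy.2
      rw [Dl_Pl hx] at this
      linarith
    have h3 : 0 < (c - E.θu) * (E.Dl c - x) := mul_pos (by linarith) (by linarith)
    linarith

lemma main3 {q : ℝ → ℝ} (hq : E.IsSchedule q)
    (h1 : (∫ y in E.θl..E.θu, q y) ≤ (∫ y in E.θl..E.θu, E.Dl y) -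
        ∫ y in E.θl..(E.Pl (q E.θl)), (E.Dl y - q E.θl))
    (h2 : (∫ y in E.θu..E.θu, q y) ≤ (∫ y in E.θu..E.θu, E.Dl y) -
        ∫ y in E.θu..(E.Pl (q E.θu)), (E.Dl y - q E.θu))
    (h3 : ∀ θ ∈ Ioo E.θl E.θu, (∫ y in θ..E.θu, q y) ≤ ∫ y in θ..E.θu, E.Dl y) :
    ∀ θ ∈ E.Θ, 0 ≤ Mfun E q θ := by
  have hqθu : q E.θu = E.ql := by
    by_contra hne
    have hpos := dwl_pos (E := E) (hq.2 E.θu (θu_mem_Θ E)) hne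
    simp only [integral_same] at h2
    linarith
  -- weak majorization at every point of Θ
  have WM : ∀ t ∈ E.Θ, (∫ y in t..E.θu, q y) ≤ ∫ y in t..E.θu, E.Dl y := by
    intro t ht
    rcases eq_or_lt_of_le ht.2 with heq | hlt
    · rw [heq]
      simp [integral_same]
    · rcases eq_or_lt_of_le ht.1 with heq | hlt2
      · subst heq
        have hd := dwl_nonneg (E := E) (hq.2 E.θl (θl_mem_Θ E)) (θl_mem_J E)
        linarith
      · exact h3 t ⟨hlt2, hlt⟩
  intro θ hθ
  have hx : q θ ∈ Icc (0:ℝ) E.qbar := hq.2 θ hθ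
  have hθJ : θ ∈ Jset E := Θ_subset_J E hθ
  have hβJ : E.Pl (q θ) ∈ Jset E := Pl_mem_J hx
  have hxql : E.ql ≤ q θ := by
    rw [← hqθu]
    exact hq.1 hθ (θu_mem_Θ E) hθ.2
  have hβθu : E.Pl (q θ) ≤ E.θu := by
    have := E.Pl_anti.antitoneOn (ql_mem E) hx hxql
    rwa [Pl_ql] at this
  by_cases hβ : E.θl ≤ E.Pl (q θ)
  · -- main case: β ∈ Θ
    have hβΘ : E.Pl (q θ) ∈ E.Θ := ⟨hβ, hβθu⟩
    have hsplit : (∫ y in θ..(E.Pl (q θ)), q y) + ∫ y in (E.Pl (q θ))..E.θu, q y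
        = ∫ y in θ..E.θu, q y :=
      integral_add_adjacent_intervals (intq hq hθ hβΘ) (intq hq hβΘ (θu_mem_Θ E))
    have t1 : (∫ y in (E.Pl (q θ))..E.θu, q y) ≤ ∫ y in (E.Pl (q θ))..E.θu, E.Dl y :=
      WM _ hβΘ
    have t2 : (∫ y in θ..(E.Pl (q θ)), q y) ≤ (E.Pl (q θ) - θ) * q θ := by
      rcases le_total θ (E.Pl (q θ)) with h | h
      · have := integral_mono_on h (intq hq hθ hβΘ) (_root_.intervalIntegrable_const (c := q θ))
          (fun y hy => hq.1 hθ ⟨le_trans hθ.1 hy.1, le_trans hy.2 hβΘ.2⟩ hy.1)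
        rwa [intervalIntegral.integral_const, smul_eq_mul] at this
      · have hflip : ∫ y in θ..(E.Pl (q θ)), q y = -∫ y in (E.Pl (q θ))..θ, q y :=
          integral_symm _ _
        have hmono : (θ - E.Pl (q θ)) * q θ ≤ ∫ y in (E.Pl (q θ))..θ, q y := by
          have := integral_mono_on h (_root_.intervalIntegrable_const (c := q θ))
            (intq hq hβΘ hθ)
            (fun y hy => hq.1 ⟨le_trans hβΘ.1 hy.1, le_trans hy.2 hθ.2⟩ hθ hy.2)
          rwa [intervalIntegral.integral_const, smul_eq_mul] at this
        linarith
    have t3 : (∫ y in (E.Pl (q θ))..E.θu, E.Dl y)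
        = Mfun E q θ - (E.Pl (q θ) - θ) * q θ + ∫ y in θ..E.θu, q y := by
      simp only [Mfun]; ring
    linarith
  · -- β < θl : compare with the constraint at θl
    push_neg at hβ
    have hxl : q E.θl ∈ Icc (0:ℝ) E.qbar := hq.2 E.θl (θl_mem_Θ E)
    have hxxl : q θ ≤ q E.θl := hq.1 (θl_mem_Θ E) hθ hθ.1
    have hβlβ : E.Pl (q E.θl) ≤ E.Pl (q θ) := E.Pl_anti.antitoneOn hx hxl hxxl
    have hβlJ : E.Pl (q E.θl) ∈ Jset E := Pl_mem_J hxl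
    have h0 : 0 ≤ Mfun E q E.θl := by
      have := lemB hq (θl_mem_Θ E)
      linarith
    have B1 : (∫ y in (E.Pl (q E.θl))..(E.Pl (q θ)), E.Dl y)
        ≤ (E.Pl (q θ) - E.Pl (q E.θl)) * q E.θl := by
      have := integral_mono_on hβlβ (intDl hβlJ hβJ)
        (_root_.intervalIntegrable_const (c := q E.θl))
        (fun y hy => by
          have hyJ : y ∈ Jset E := ⟨le_trans hβlJ.1 hy.1, le_trans hy.2 hβJ.2⟩
          have := Dl_anti E hβlJ hyJ hy.1
          rwa [Dl_Pl hxl] at this)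
      rwa [intervalIntegral.integral_const, smul_eq_mul] at this
    have B2 : (θ - E.θl) * q θ ≤ ∫ y in E.θl..θ, q y := by
      have := integral_mono_on hθ.1 (_root_.intervalIntegrable_const (c := q θ))
        (intq hq (θl_mem_Θ E) hθ)
        (fun y hy => hq.1 ⟨hy.1, le_trans hy.2 hθ.2⟩ hθ hy.2)
      rwa [intervalIntegral.integral_const, smul_eq_mul] at this
    have E1 : (∫ y in (E.Pl (q E.θl))..(E.Pl (q θ)), E.Dl y)
        + ∫ y in (E.Pl (q θ))..E.θu, E.Dl y
        = ∫ y in (E.Pl (q E.θl))..E.θu, E.Dl y :=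
      integral_add_adjacent_intervals (intDl hβlJ hβJ) (intDl hβJ (θu_mem_J E))
    have E2 : (∫ y in E.θl..θ, q y) + ∫ y in θ..E.θu, q y = ∫ y in E.θl..E.θu, q y :=
      integral_add_adjacent_intervals (intq hq (θl_mem_Θ E) hθ) (intq hq hθ (θu_mem_Θ E))
    have hprod : 0 ≤ (E.θl - E.Pl (q θ)) * (q E.θl - q θ) :=
      mul_nonneg (by linarith) (by linarith)
    have key : Mfun E q θ = Mfun E q E.θl
        + (-(∫ y in (E.Pl (q E.θl))..(E.Pl (q θ)), E.Dl y)
            + (E.Pl (q θ) - θ) * q θ - (E.Pl (q E.θl) - E.θl) * q E.θl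
            + ∫ y in E.θl..θ, q y) := by
      simp only [Mfun]
      linear_combination E1 - E2
    rw [key]
    nlinarith [h0, B1, B2, hprod]

lemma iff2 {q : ℝ → ℝ} (hq : E.IsSchedule q) {θ : ℝ} (hθ : θ ∈ E.Θ) :
    (E.Gstar ≤ E.Wl q θ) ↔
      (∫ y in θ..E.θu, q y) ≤
        (∫ y in θ..E.θu, E.Dl y) - ∫ y in θ..(E.Pl (q θ)), (E.Dl y - q θ) := by
  have hA := lemA hq hθ
  have hB := lemB hq hθ
  constructor <;> intro h <;> linarith

end MajAux

private lemma majorization_equivalences_aux (E : Env) (q : ℝ → ℝ) (hq : E.IsSchedule q) :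
    ((∀ θ ∈ E.Θ, E.Gstar ≤ E.Wl q θ) ↔
      ∀ θ ∈ E.Θ, (∫ y in θ..E.θu, q y) ≤
        (∫ y in θ..E.θu, E.Dl y) - ∫ y in θ..(E.Pl (q θ)), (E.Dl y - q θ)) ∧
    ((∀ θ ∈ E.Θ, E.Gstar ≤ E.Wl q θ) ↔
      (((∫ y in E.θl..E.θu, q y) ≤
          (∫ y in E.θl..E.θu, E.Dl y) -
            ∫ y in E.θl..(E.Pl (q E.θl)), (E.Dl y - q E.θl)) ∧
        ((∫ y in E.θu..E.θu, q y) ≤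
          (∫ y in E.θu..E.θu, E.Dl y) -
            ∫ y in E.θu..(E.Pl (q E.θu)), (E.Dl y - q E.θu)) ∧
        ∀ θ ∈ Ioo E.θl E.θu, (∫ y in θ..E.θu, q y) ≤ ∫ y in θ..E.θu, E.Dl y)) := by
  constructor
  · exact forall₂_congr (fun θ hθ => MajAux.iff2 hq hθ)
  · constructor
    · intro h
      refine ⟨(MajAux.iff2 hq (MajAux.θl_mem_Θ E)).mp (h _ (MajAux.θl_mem_Θ E)),
        (MajAux.iff2 hq (MajAux.θu_mem_Θ E)).mp (h _ (MajAux.θu_mem_Θ E)), ?_⟩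
      intro θ hθ'
      have hθ : θ ∈ E.Θ := ⟨le_of_lt hθ'.1, le_of_lt hθ'.2⟩
      have hc := (MajAux.iff2 hq hθ).mp (h θ hθ)
      have hd := MajAux.dwl_nonneg (E := E) (hq.2 θ hθ) (MajAux.Θ_subset_J E hθ)
      linarith
    · rintro ⟨h1, h2, h3⟩ θ hθ
      have hM := MajAux.main3 hq h1 h2 h3 θ hθ
      have hA := MajAux.lemA hq hθ
      linarith

/-- Lemma (majorizations): for a weakly decreasing schedule `q : Θ → [0, qbar]`, the
robustness constraints (1), the majorization constraints with deadweight loss (2),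
and the weak majorization constraints plus the endpoint constraints (3) are
pairwise equivalent. -/
theorem majorization_equivalences (E : Env) (q : ℝ → ℝ) (hq : E.IsSchedule q) :
    ((∀ θ ∈ E.Θ, E.Gstar ≤ E.Wl q θ) ↔
      ∀ θ ∈ E.Θ, (∫ y in θ..E.θu, q y) ≤
        (∫ y in θ..E.θu, E.Dl y) - ∫ y in θ..(E.Pl (q θ)), (E.Dl y - q θ)) ∧
    ((∀ θ ∈ E.Θ, E.Gstar ≤ E.Wl q θ) ↔
      (((∫ y in E.θl..E.θu, q y) ≤
          (∫ y in E.θl..E.θu, E.Dl y) -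
            ∫ y in E.θl..(E.Pl (q E.θl)), (E.Dl y - q E.θl)) ∧
        ((∫ y in E.θu..E.θu, q y) ≤
          (∫ y in E.θu..E.θu, E.Dl y) -
            ∫ y in E.θu..(E.Pl (q E.θu)), (E.Dl y - q E.θu)) ∧
        ∀ θ ∈ Ioo E.θl E.θu, (∫ y in θ..E.θu, q y) ≤ ∫ y in θ..E.θu, E.Dl y)) := by
  exact majorization_equivalences_aux E q hq
end
end

section
/- Let q : Θ → [0, q̄] be weakly decreasing and let I ⊆ Θ be an interval. If 0 < q(θ) ≤ D̲(θ) for all θ ∈ I, then θ ↦ W̲(θ, q) is weakly decreasing on I. If, in addition, q is strictly decreasing on I and q(θ) < D̲(θ) for all θ ∈ I, then θ ↦ W̲(θ, q) is strictly decreasing on I. -/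
open MeasureTheory Set

noncomputable section

/-! Between two types `a ≤ b` of a schedule `q`, monotonicity of `P̲` and of `q` give
`W̲(b) − W̲(a) ≤ (b − P̲(q a)) (q a − q b)`. Where `q ≤ D̲` one has `θ ≤ P̲(q θ)`, so the
increment is at most `(b − a)(q a − q b)`; summing over a fine uniform partition of `[a, b]`
telescopes to `(b − a)(q a − q b)/n → 0`. Where `q < D̲` the factor `b − P̲(q a)` is negative
for `b` close to `a`, which gives strictness once `q` drops strictly. -/

lemma sub_le_div_of_sub_le_mul_sub {f g : ℝ → ℝ} {a b : ℝ} (hab : a ≤ b)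
    (h : ∀ x ∈ Icc a b, ∀ y ∈ Icc a b, x ≤ y → f y - f x ≤ (y - x) * (g x - g y))
    {n : ℕ} (hn : 0 < n) :
    f b - f a ≤ (b - a) * (g a - g b) / n := by
  have hn' : (0 : ℝ) < n := Nat.cast_pos.2 hn
  set δ := (b - a) / n with hδ
  have hδ0 : 0 ≤ δ := div_nonneg (sub_nonneg.2 hab) hn'.le
  let t : ℕ → ℝ := fun i => a + i * δ
  have ht0 : t 0 = a := by simp [t]
  have htn : t n = b := by simp only [t, hδ]; field_simp; ring
  have hmem : ∀ i ≤ n, t i ∈ Icc a b := fun i hi => by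
    refine ⟨le_add_of_nonneg_right (by positivity), ?_⟩
    calc t i ≤ t n := by simp only [t]; gcongr
      _ = b := htn
  have hstep : ∀ i ∈ Finset.range n,
      f (t (i + 1)) - f (t i) ≤ δ * (g (t i) - g (t (i + 1))) := fun i hi => by
    have hi := Finset.mem_range.1 hi
    have h' := h _ (hmem i hi.le) _ (hmem (i + 1) hi) (by simp only [t]; push_cast; linarith)
    simpa only [t, Nat.cast_succ, add_mul, one_mul, add_sub_add_left_eq_sub,
      add_sub_cancel_left] using h'
  calc f b - f a = ∑ i ∈ Finset.range n, (f (t (i + 1)) - f (t i)) := by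
        rw [Finset.sum_range_sub (fun i => f (t i)), ht0, htn]
    _ ≤ ∑ i ∈ Finset.range n, δ * (g (t i) - g (t (i + 1))) := Finset.sum_le_sum hstep
    _ = (b - a) * (g a - g b) / n := by
        rw [← Finset.mul_sum, Finset.sum_range_sub', ht0, htn, hδ]; ring

lemma antitoneOn_of_sub_le_mul_sub {f g : ℝ → ℝ} {s : Set ℝ} (hs : s.OrdConnected)
    (h : ∀ x ∈ s, ∀ y ∈ s, x ≤ y → f y - f x ≤ (y - x) * (g x - g y)) :
    AntitoneOn f s := by
  intro a ha b hb hab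
  have hIcc : Icc a b ⊆ s := hs.out ha hb
  have hbound : ∀ᶠ n : ℕ in Filter.atTop, f b - f a ≤ (b - a) * (g a - g b) / n :=
    Filter.eventually_atTop.2 ⟨1, fun n hn => sub_le_div_of_sub_le_mul_sub hab
      (fun x hx y hy => h x (hIcc hx) y (hIcc hy)) hn⟩
  have := ge_of_tendsto (tendsto_const_div_atTop_nhds_zero_nat _) hbound
  linarith

namespace Env

variable (E : Env) {q : ℝ → ℝ} {x θ : ℝ}

lemma le_Pl_of_le_Dl (hx : x ∈ Icc 0 E.qbar) (hθ : θ ≤ E.Pl 0) (h : x ≤ E.Dl θ) :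
    θ ≤ E.Pl x := by
  rcases lt_or_ge θ (E.Pl E.qbar) with hlow | hmid
  · exact hlow.le.trans (E.Pl_anti.antitoneOn hx (right_mem_Icc.2 E.qbar_pos.le) hx.2)
  · obtain ⟨hD, hPD⟩ := E.Dl_inv θ hmid hθ
    exact hPD ▸ E.Pl_anti.antitoneOn hx hD h

lemma lt_Pl_of_lt_Dl (hx : x ∈ Icc 0 E.qbar) (hθ : θ ≤ E.Pl 0) (h : x < E.Dl θ) :
    θ < E.Pl x := by
  rcases lt_or_ge θ (E.Pl E.qbar) with hlow | hmid
  · exact hlow.trans_le (E.Pl_anti.antitoneOn hx (right_mem_Icc.2 E.qbar_pos.le) hx.2)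
  · obtain ⟨hD, hPD⟩ := E.Dl_inv θ hmid hθ
    exact hPD ▸ E.Pl_anti hx hD h

lemma intervalIntegrable_Pl {x y : ℝ} (hx : x ∈ Icc 0 E.qbar) (hy : y ∈ Icc 0 E.qbar) :
    IntervalIntegrable E.Pl volume x y :=
  (E.Pl_cont.mono (uIcc_subset_Icc hx hy)).intervalIntegrable

lemma sub_mul_Pl_le_Vl_sub {x y : ℝ} (hx : x ∈ Icc 0 E.qbar) (hy : y ∈ Icc 0 E.qbar)
    (hyx : y ≤ x) : (x - y) * E.Pl x ≤ E.Vl x - E.Vl y := by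
  have hzero : (0 : ℝ) ∈ Icc 0 E.qbar := left_mem_Icc.2 E.qbar_pos.le
  rw [Vl, Vl, intervalIntegral.integral_interval_sub_left (E.intervalIntegrable_Pl hzero hx)
    (E.intervalIntegrable_Pl hzero hy)]
  calc (x - y) * E.Pl x = ∫ _ in y..x, E.Pl x := by simp
    _ ≤ ∫ s in y..x, E.Pl s :=
      intervalIntegral.integral_mono_on hyx intervalIntegrable_const
        (E.intervalIntegrable_Pl hy hx) fun s hs =>
          E.Pl_anti.antitoneOn ⟨hy.1.trans hs.1, hs.2.trans hx.2⟩ hx hs.2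

lemma Wl_sub_Wl_le (hq : E.IsSchedule q) {a b : ℝ} (ha : a ∈ E.Θ) (hb : b ∈ E.Θ)
    (hab : a ≤ b) : E.Wl q b - E.Wl q a ≤ (b - E.Pl (q a)) * (q a - q b) := by
  have hqab : q b ≤ q a := hq.1 ha hb hab
  have hint : ∀ {c}, c ∈ E.Θ → IntervalIntegrable q volume c E.θu := fun hc => by
    apply AntitoneOn.intervalIntegrable
    rw [uIcc_of_le hc.2]
    exact hq.1.mono (Icc_subset_Icc hc.1 le_rfl)
  have hsplit : (∫ y in a..E.θu, q y) - ∫ y in b..E.θu, q y = ∫ y in a..b, q y := by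
    rw [intervalIntegral.integral_interval_sub_interval_comm (hint ha) (hint hb)
      ((hint ha).trans (hint hb).symm), intervalIntegral.integral_same, sub_zero]
  have hint_le : ∫ y in a..b, q y ≤ (b - a) * q a := by
    calc ∫ y in a..b, q y ≤ ∫ _ in a..b, q a :=
          intervalIntegral.integral_mono_on hab ((hint ha).trans (hint hb).symm)
            intervalIntegrable_const fun y hy =>
              hq.1 ha ⟨ha.1.trans hy.1, hy.2.trans hb.2⟩ hy.1
      _ = (b - a) * q a := by simp
  have hV := E.sub_mul_Pl_le_Vl_sub (hq.2 a ha) (hq.2 b hb) hqab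
  simp only [Wl]
  nlinarith

variable {E} {I : Set ℝ}

lemma Wl_antitoneOn (hq : E.IsSchedule q) (hIΘ : I ⊆ E.Θ) (hI : I.OrdConnected)
    (hD : ∀ θ ∈ I, q θ ≤ E.Dl θ) : AntitoneOn (E.Wl q) I :=
  antitoneOn_of_sub_le_mul_sub hI fun a ha b hb hab => by
    have hPa : a ≤ E.Pl (q a) :=
      E.le_Pl_of_le_Dl (hq.2 a (hIΘ ha)) ((hIΘ ha).2.trans E.Pl0.le) (hD a ha)
    calc E.Wl q b - E.Wl q a ≤ (b - E.Pl (q a)) * (q a - q b) :=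
          E.Wl_sub_Wl_le hq (hIΘ ha) (hIΘ hb) hab
      _ ≤ (b - a) * (q a - q b) := by
          gcongr
          exact sub_nonneg.2 (hq.1 (hIΘ ha) (hIΘ hb) hab)

lemma Wl_strictAntiOn (hq : E.IsSchedule q) (hIΘ : I ⊆ E.Θ) (hI : I.OrdConnected)
    (hD : ∀ θ ∈ I, q θ < E.Dl θ) (hqI : StrictAntiOn q I) : StrictAntiOn (E.Wl q) I := by
  intro a ha b hb hab
  have hPa : a < E.Pl (q a) :=
    E.lt_Pl_of_lt_Dl (hq.2 a (hIΘ ha)) ((hIΘ ha).2.trans E.Pl0.le) (hD a ha)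
  set c := min b ((a + E.Pl (q a)) / 2)
  have hac : a < c := lt_min hab (by linarith)
  have hcb : c ≤ b := min_le_left _ _
  have hcP : c < E.Pl (q a) := (min_le_right _ _).trans_lt (by linarith)
  have hcI : c ∈ I := hI.out ha hb ⟨hac.le, hcb⟩
  have hqc : q c < q a := hqI ha hcI hac
  have hWc : E.Wl q c < E.Wl q a := by
    have := E.Wl_sub_Wl_le hq (hIΘ ha) (hIΘ hcI) hac.le
    nlinarith
  exact ((Wl_antitoneOn hq hIΘ hI fun θ hθ => (hD θ hθ).le) hcI hb hcb).trans_lt hWc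

end Env

/-- Lemma (monotonicity, part A): if `0 < q ≤ D̲` on an interval `I ⊆ Θ`, then
`W̲(·, q)` is weakly decreasing on `I`; if moreover `q` is strictly decreasing on `I`
with `q < D̲` there, then `W̲(·, q)` is strictly decreasing on `I`. -/
theorem Wl_antitone_on (E : Env) (q : ℝ → ℝ) (hq : E.IsSchedule q)
    (I : Set ℝ) (hIsub : I ⊆ E.Θ) (hIconn : I.OrdConnected) :
    ((∀ θ ∈ I, 0 < q θ ∧ q θ ≤ E.Dl θ) → AntitoneOn (fun θ => E.Wl q θ) I) ∧
    ((∀ θ ∈ I, 0 < q θ ∧ q θ < E.Dl θ) → StrictAntiOn q I →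
      StrictAntiOn (fun θ => E.Wl q θ) I) :=
  ⟨fun hD => Env.Wl_antitoneOn hq hIsub hIconn fun θ hθ => (hD θ hθ).2,
    fun hD => Env.Wl_strictAntiOn hq hIsub hIconn fun θ hθ => (hD θ hθ).2⟩
end
end

section
/- Let q : Θ → [0, q̄] be weakly decreasing and let I ⊆ Θ be an interval. If q(θ) > D̲(θ) for all θ ∈ I, then θ ↦ W̲(θ, q) is weakly increasing on I. If, in addition, q is strictly decreasing on I, then θ ↦ W̲(θ, q) is strictly increasing on I. -/
open MeasureTheory Set

noncomputable section

/-- Lemma (monotonicity, part B): if `q > D̲` on an interval `I ⊆ Θ`, then `W̲(·, q)`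
is weakly increasing on `I`; if moreover `q` is strictly decreasing on `I`, then
`W̲(·, q)` is strictly increasing on `I`. (Auxiliary lemmas first.) -/
lemma Pl_qθ_lt' : True := trivial

/-- If `D̲(θ) < q(θ)` for `θ ∈ Θ`, then `P̲(q(θ)) < θ`. -/
lemma Pl_qθ_lt (E : Env) (q : ℝ → ℝ) (hq : E.IsSchedule q) {θ : ℝ} (hθ : θ ∈ E.Θ)
    (h : E.Dl θ < q θ) : E.Pl (q θ) < θ := by
  have hqθ := hq.2 θ hθ
  have h1 : E.Pl E.qbar ≤ θ := by
    by_contra hc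
    push_neg at hc
    have h2 := E.Dl_low θ hc
    rw [h2] at h
    exact absurd hqθ.2 (not_le.mpr h)
  have h2 : θ ≤ E.Pl 0 := le_of_lt (lt_of_le_of_lt hθ.2 E.Pl0)
  obtain ⟨hD, hPD⟩ := E.Dl_inv θ h1 h2
  have h3 := E.Pl_anti hD hqθ h
  rwa [hPD] at h3

/-- Key two-point estimate: for `x ≤ y` in `Θ` with `D̲(y) < q(y)`,
`W̲(x) + (q x − q y)(x − P̲(q y)) ≤ W̲(y)`. -/
lemma Wl_step (E : Env) (q : ℝ → ℝ) (hq : E.IsSchedule q)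
    {x y : ℝ} (hx : x ∈ E.Θ) (hy : y ∈ E.Θ) (hxy : x ≤ y) :
    E.Wl q x + (q x - q y) * (x - E.Pl (q y)) ≤ E.Wl q y := by
  have hqx := hq.2 x hx
  have hqy := hq.2 y hy
  have hqyx : q y ≤ q x := hq.1 hx hy hxy
  have hxu : x ≤ E.θu := hx.2
  have hyu : y ≤ E.θu := hy.2
  -- integrability of Pl
  have hPint : ∀ a b : ℝ, a ∈ Icc (0:ℝ) E.qbar → b ∈ Icc (0:ℝ) E.qbar →
      IntervalIntegrable E.Pl volume a b := by
    intro a b ha hb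
    exact (E.Pl_cont.mono (Set.ordConnected_Icc.uIcc_subset ha hb)).intervalIntegrable
  have h0bar : (0:ℝ) ∈ Icc (0:ℝ) E.qbar := ⟨le_refl _, le_of_lt E.qbar_pos⟩
  have hIx : IntervalIntegrable E.Pl volume 0 (q x) := hPint _ _ h0bar hqx
  have hIy : IntervalIntegrable E.Pl volume 0 (q y) := hPint _ _ h0bar hqy
  have hIyx : IntervalIntegrable E.Pl volume (q y) (q x) := hPint _ _ hqy hqx
  -- Vl difference
  have hVl : E.Vl (q x) - E.Vl (q y) = ∫ s in (q y)..(q x), E.Pl s :=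
    intervalIntegral.integral_interval_sub_left hIx hIy
  -- bound on the Pl integral
  have hPbound : (∫ s in (q y)..(q x), E.Pl s) ≤ (q x - q y) * E.Pl (q y) := by
    have hmono : ∀ s ∈ Icc (q y) (q x), E.Pl s ≤ E.Pl (q y) := by
      intro s hs
      have hsmem : s ∈ Icc (0:ℝ) E.qbar := ⟨hqy.1.trans hs.1, hs.2.trans hqx.2⟩
      exact E.Pl_anti.antitoneOn hqy hsmem hs.1
    have := intervalIntegral.integral_mono_on hqyx hIyx
      (intervalIntegrable_const) hmono
    simpa [intervalIntegral.integral_const, smul_eq_mul] using this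
  -- integrability of q
  have hqint : ∀ a b : ℝ, a ∈ E.Θ → b ∈ E.Θ → IntervalIntegrable q volume a b := by
    intro a b ha hb
    exact (hq.1.mono (Set.ordConnected_Icc.uIcc_subset ha hb)).intervalIntegrable
  have hθuΘ : E.θu ∈ E.Θ := ⟨le_of_lt E.θlu, le_refl _⟩
  -- split the q integral
  have hsplit : (∫ s in x..y, q s) + (∫ s in y..E.θu, q s) = ∫ s in x..E.θu, q s :=
    intervalIntegral.integral_add_adjacent_intervals (hqint _ _ hx hy) (hqint _ _ hy hθuΘ)
  -- lower bound on the q integral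
  have hqbound : (y - x) * q y ≤ ∫ s in x..y, q s := by
    have hmono : ∀ s ∈ Icc x y, q y ≤ q s := by
      intro s hs
      have hsmem : s ∈ E.Θ := ⟨hx.1.trans hs.1, hs.2.trans hyu⟩
      exact hq.1 hsmem hy hs.2
    have := intervalIntegral.integral_mono_on hxy
      (intervalIntegrable_const) (hqint _ _ hx hy) hmono
    simpa [intervalIntegral.integral_const, smul_eq_mul] using this
  -- conclude
  simp only [Env.Wl] at *
  nlinarith [hVl, hPbound, hqbound, hsplit]

/-- Lemma (monotonicity, part B): if `q > D̲` on an interval `I ⊆ Θ`, then `W̲(·, q)`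
is weakly increasing on `I`; if moreover `q` is strictly decreasing on `I`, then
`W̲(·, q)` is strictly increasing on `I`. -/
theorem Wl_monotone_on (E : Env) (q : ℝ → ℝ) (hq : E.IsSchedule q)
    (I : Set ℝ) (hIsub : I ⊆ E.Θ) (hIconn : I.OrdConnected) :
    ((∀ θ ∈ I, E.Dl θ < q θ) → MonotoneOn (fun θ => E.Wl q θ) I) ∧
    ((∀ θ ∈ I, E.Dl θ < q θ) → StrictAntiOn q I →
      StrictMonoOn (fun θ => E.Wl q θ) I) := by
  have key : (∀ θ ∈ I, E.Dl θ < q θ) → MonotoneOn (fun θ => E.Wl q θ) I := by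
    intro hDq a ha b hb hab
    rcases eq_or_lt_of_le hab with rfl | hab'
    · exact le_refl _
    have hICC : Icc a b ⊆ I := hIconn.out ha hb
    have hmemI : ∀ t ∈ Icc a b, t ∈ E.Θ := fun t ht => hIsub (hICC ht)
    -- telescoping estimate: for every n ≥ 1,
    -- Wl a ≤ Wl b + (b - a) * (q a - q b) / n
    have main : ∀ n : ℕ, 0 < n →
        E.Wl q a ≤ E.Wl q b + (b - a) * (q a - q b) / n := by
      intro n hn
      set Δ : ℝ := (b - a) / n with hΔdef
      have hnpos : (0:ℝ) < n := Nat.cast_pos.mpr hn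
      have hΔpos : 0 < Δ := div_pos (by linarith) hnpos
      set t : ℕ → ℝ := fun i => a + Δ * i with htdef
      have ht0 : t 0 = a := by simp [htdef]
      have htn : t n = b := by
        show a + (b - a) / n * n = b
        field_simp
        ring
      have htmono : ∀ i j : ℕ, i ≤ j → t i ≤ t j := by
        intro i j hij
        simp only [htdef]
        have : (i:ℝ) ≤ j := Nat.cast_le.mpr hij
        nlinarith
      have htmem : ∀ i : ℕ, i ≤ n → t i ∈ Icc a b := by
        intro i hi
        constructor
        · rw [← ht0]; exact htmono 0 i (Nat.zero_le i)
        · rw [← htn]; exact htmono i n hi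
      have hstep : ∀ i : ℕ, i < n →
          E.Wl q (t i) ≤ E.Wl q (t (i+1)) + Δ * (q (t i) - q (t (i+1))) := by
        intro i hi
        have hmi : t i ∈ Icc a b := htmem i (le_of_lt hi)
        have hmi1 : t (i+1) ∈ Icc a b := htmem (i+1) hi
        have hle : t i ≤ t (i+1) := htmono i (i+1) (Nat.le_succ i)
        have hkey := Wl_step E q hq (hmemI _ hmi) (hmemI _ hmi1) hle
        have hPl : E.Pl (q (t (i+1))) < t (i+1) :=
          Pl_qθ_lt E q hq (hmemI _ hmi1) (hDq _ (hICC hmi1))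
        have hqd : q (t (i+1)) ≤ q (t i) := hq.1 (hmemI _ hmi) (hmemI _ hmi1) hle
        have hdiff : t (i+1) - t i = Δ := by simp [htdef]; ring
        nlinarith [hkey, mul_le_mul_of_nonneg_left (le_of_lt hPl) (sub_nonneg.mpr hqd)]
      -- sum the step inequalities
      have hsum : E.Wl q b - E.Wl q a ≥ -(Δ * (q a - q b)) := by
        have h1 : ∑ i ∈ Finset.range n, (E.Wl q (t (i+1)) - E.Wl q (t i))
            = E.Wl q b - E.Wl q a := by
          rw [Finset.sum_range_sub (fun i => E.Wl q (t i)) n, ht0, htn]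
        have h2 : ∑ i ∈ Finset.range n, (q (t (i+1)) - q (t i)) = q b - q a := by
          rw [Finset.sum_range_sub (fun i => q (t i)) n, ht0, htn]
        have h3 : ∀ i ∈ Finset.range n,
            -(Δ * (q (t i) - q (t (i+1)))) ≤ E.Wl q (t (i+1)) - E.Wl q (t i) := by
          intro i hi
          have := hstep i (Finset.mem_range.mp hi)
          linarith
        have h4 := Finset.sum_le_sum h3
        rw [h1] at h4
        have h5 : ∑ i ∈ Finset.range n, -(Δ * (q (t i) - q (t (i+1))))
            = -(Δ * (q a - q b)) := by
          calc ∑ i ∈ Finset.range n, -(Δ * (q (t i) - q (t (i+1))))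
              = ∑ i ∈ Finset.range n, Δ * (q (t (i+1)) - q (t i)) := by
                apply Finset.sum_congr rfl; intro i _; ring
            _ = Δ * (q b - q a) := by rw [← Finset.mul_sum, h2]
            _ = -(Δ * (q a - q b)) := by ring
        rw [h5] at h4
        linarith
      have : Δ * (q a - q b) = (b - a) * (q a - q b) / n := by
        rw [hΔdef]; ring
      linarith [hsum, this.symm.le]
    -- take n → ∞
    refine le_of_forall_pos_le_add ?_
    intro ε hε
    set C : ℝ := (b - a) * (q a - q b) with hC
    have hC0 : 0 ≤ C := by
      have := hq.1 (hIsub ha) (hIsub hb) hab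
      have hba : 0 ≤ b - a := by linarith
      exact mul_nonneg hba (by linarith)
    obtain ⟨n, hn⟩ := exists_nat_gt (C / ε)
    have hn1 : 0 < n := by
      by_contra hc
      push_neg at hc
      interval_cases n
      simp at hn
      have := div_nonneg hC0 (le_of_lt hε)
      linarith
    have h1 := main n hn1
    have hnpos : (0:ℝ) < n := Nat.cast_pos.mpr hn1
    have h2 : C / n < ε := by
      rw [div_lt_iff₀ hnpos]
      calc C = (C / ε) * ε := by field_simp
        _ < n * ε := by apply mul_lt_mul_of_pos_right hn hε
        _ = ε * n := by ring
    calc E.Wl q a ≤ E.Wl q b + C / n := h1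
      _ ≤ E.Wl q b + ε := by linarith
  refine ⟨key, ?_⟩
  intro hDq hstrict a ha b hb hab
  -- strict part
  have hPlb : E.Pl (q b) < b := Pl_qθ_lt E q hq (hIsub hb) (hDq b hb)
  set x : ℝ := max a ((b + E.Pl (q b)) / 2) with hxdef
  have hxb : x < b := max_lt hab (by linarith)
  have hax : a ≤ x := le_max_left _ _
  have hxI : x ∈ I := hIconn.out ha hb ⟨hax, le_of_lt hxb⟩
  have hPlx : E.Pl (q b) < x := lt_of_lt_of_le (by linarith) (le_max_right _ _)
  have hqx : q b < q x := hstrict hxI hb hxb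
  have hkey := Wl_step E q hq (hIsub hxI) (hIsub hb) (le_of_lt hxb)
  have hpos : 0 < (q x - q b) * (x - E.Pl (q b)) :=
    mul_pos (by linarith) (by linarith)
  have h1 : E.Wl q x < E.Wl q b := by linarith
  have h2 : E.Wl q a ≤ E.Wl q x := key hDq ha hxI hax
  simpa using lt_of_le_of_lt h2 h1
end
end

section
/- For every EPIC and EPIR price regulation (p, t): G̃((p, t)) ≤ G*, and the maximum of G̃ over all EPIC and EPIR price regulations equals G*. Moreover, an EPIC and EPIR price regulation (p, t) is in the price short list if and only if: (a) p is weakly increasing; (b) ũ(θ, D) = ũ(θ̄, D) + ∫_θ^{θ̄} D(p(y)) dy for all θ ∈ Θ and D ∈ 𝒟, with ũ(θ̄, D) ≥ 0 for all D ∈ 𝒟 and ũ(θ̄, D̲) = 0; (c) p(θ̄) = θ̄; and (d) w̃(θ; D) ≥ G* for all θ ∈ Θ and D ∈ 𝒟. -/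
open MeasureTheory Set

noncomputable section

namespace PSLAux

open intervalIntegral

variable {E : Env}

lemma theta_u_mem (E : Env) : E.θu ∈ E.Θ := ⟨E.θlu.le, le_refl _⟩

lemma theta_l_mem (E : Env) : E.θl ∈ E.Θ := ⟨le_refl _, E.θlu.le⟩

lemma qbar_mem (E : Env) : E.qbar ∈ Icc (0:ℝ) E.qbar := ⟨E.qbar_pos.le, le_refl _⟩

lemma zero_mem (E : Env) : (0:ℝ) ∈ Icc (0:ℝ) E.qbar := ⟨le_refl _, E.qbar_pos.le⟩

lemma Pl_qbar_lt (E : Env) : E.Pl E.qbar < E.θl := by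
  by_contra h
  push_neg at h
  rcases eq_or_lt_of_le h with h' | h'
  · obtain ⟨hmem, hinv⟩ := E.Dl_inv E.θl h'.ge (le_of_lt (E.θlu.trans E.Pl0))
    have : E.Dl E.θl = E.qbar := by
      by_contra hne
      have hlt : E.Dl E.θl < E.qbar := lt_of_le_of_ne hmem.2 hne
      have := E.Pl_anti hmem (qbar_mem E) hlt
      rw [hinv, ← h'] at this
      exact lt_irrefl _ this
    exact absurd this (ne_of_lt E.Dl_lt)
  · have := E.Dl_low E.θl h'
    exact absurd this (ne_of_lt E.Dl_lt)

lemma ql_spec (E : Env) : E.ql ∈ Icc (0:ℝ) E.qbar ∧ E.Pl E.ql = E.θu :=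
  E.Dl_inv E.θu (le_of_lt ((Pl_qbar_lt E).trans E.θlu)) E.Pl0.le

lemma ql_mem (E : Env) : E.ql ∈ Icc (0:ℝ) E.qbar := (ql_spec E).1

lemma Pl_ql (E : Env) : E.Pl E.ql = E.θu := (ql_spec E).2

lemma ql_pos (E : Env) : 0 < E.ql := by
  rcases eq_or_lt_of_le (ql_mem E).1 with h | h
  · exfalso
    have := Pl_ql E
    rw [← h] at this
    exact absurd this.symm (ne_of_lt E.Pl0)
  · exact h

lemma ql_lt (E : Env) : E.ql < E.qbar := by
  rcases eq_or_lt_of_le (ql_mem E).2 with h | h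
  · exfalso
    have := Pl_ql E
    rw [h] at this
    have := this ▸ (Pl_qbar_lt E)
    exact absurd E.θlu (not_lt.mpr this.le)
  · exact h

/-- interval integrability of `Pl` on subintervals of `[0, qbar]`. -/
lemma Pl_intInt (E : Env) {a b : ℝ} (ha : a ∈ Icc (0:ℝ) E.qbar) (hb : b ∈ Icc (0:ℝ) E.qbar) :
    IntervalIntegrable E.Pl MeasureTheory.volume a b := by
  apply ContinuousOn.intervalIntegrable
  exact E.Pl_cont.mono (uIcc_subset_Icc ha hb)

lemma integral_le_const {f : ℝ → ℝ} {a b c : ℝ} (hab : a ≤ b)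
    (hf : IntervalIntegrable f MeasureTheory.volume a b)
    (h : ∀ x ∈ Icc a b, f x ≤ c) : ∫ x in a..b, f x ≤ (b - a) * c := by
  have := intervalIntegral.integral_mono_on hab hf intervalIntegrable_const h
  simpa using this

lemma const_le_integral {f : ℝ → ℝ} {a b c : ℝ} (hab : a ≤ b)
    (hf : IntervalIntegrable f MeasureTheory.volume a b)
    (h : ∀ x ∈ Icc a b, c ≤ f x) : (b - a) * c ≤ ∫ x in a..b, f x := by
  have := intervalIntegral.integral_mono_on hab intervalIntegrable_const hf h
  simpa using this

end PSLAux

namespace PSLAux2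

open intervalIntegral PSLAux

variable {E : Env}

lemma P_lt (D : Demand E) : D.P E.qbar < D.P 0 :=
  D.P_anti (zero_mem E) (qbar_mem E) E.qbar_pos

lemma D_mem (D : Demand E) (v : ℝ) : D.D v ∈ Icc (0:ℝ) E.qbar := by
  by_cases h1 : D.P 0 < v
  · rw [D.D_high v h1]; exact zero_mem E
  by_cases h2 : v < D.P E.qbar
  · rw [D.D_low v h2]; exact qbar_mem E
  exact (D.D_inv v (not_lt.mp h2) (not_lt.mp h1)).1

lemma D_anti (D : Demand E) {v w : ℝ} (hvw : v ≤ w) : D.D w ≤ D.D v := by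
  by_cases hw : D.P 0 < w
  · rw [D.D_high w hw]; exact (D_mem D v).1
  by_cases hv : v < D.P E.qbar
  · rw [D.D_low v hv]; exact (D_mem D w).2
  have hv2 : D.P E.qbar ≤ v := not_lt.mp hv
  have hw2 : w ≤ D.P 0 := not_lt.mp hw
  obtain ⟨hmv, hiv⟩ := D.D_inv v hv2 (hvw.trans hw2)
  obtain ⟨hmw, hiw⟩ := D.D_inv w (hv2.trans hvw) hw2
  by_contra h
  push_neg at h
  have := D.P_anti hmv hmw h
  rw [hiv, hiw] at this
  exact absurd hvw (not_le.mpr this)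

/-- If the price is at most `P qbar`, demand is `qbar`. -/
lemma D_eq_qbar (D : Demand E) {v : ℝ} (h : v ≤ D.P E.qbar) : D.D v = E.qbar := by
  rcases lt_or_eq_of_le h with h' | h'
  · exact D.D_low v h'
  · obtain ⟨hm, hi⟩ := D.D_inv v h'.ge (h'.le.trans (P_lt D).le)
    by_contra hne
    have hlt : D.D v < E.qbar := lt_of_le_of_ne hm.2 hne
    have := D.P_anti hm (qbar_mem E) hlt
    rw [hi, ← h'] at this
    exact lt_irrefl _ this

/-- demand is at least `x` when the price is at most `P x`. -/
lemma le_D (D : Demand E) {v x : ℝ} (hx : x ∈ Icc (0:ℝ) E.qbar) (h : v ≤ D.P x) :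
    x ≤ D.D v := by
  by_cases hv : v < D.P E.qbar
  · rw [D.D_low v hv]; exact hx.2
  have hv2 : D.P E.qbar ≤ v := not_lt.mp hv
  have hvP0 : v ≤ D.P 0 := by
    rcases eq_or_lt_of_le hx.1 with h0 | h0
    · rw [← h0] at h; exact h
    · exact h.trans (D.P_anti (zero_mem E) hx h0).le
  obtain ⟨hm, hi⟩ := D.D_inv v hv2 hvP0
  by_contra hc
  push_neg at hc
  have := D.P_anti hm hx hc
  rw [hi] at this
  exact absurd h (not_le.mpr this)

/-- interval integrability of `D.P` on subintervals of `[0, qbar]`. -/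
lemma P_intInt (D : Demand E) {a b : ℝ} (ha : a ∈ Icc (0:ℝ) E.qbar)
    (hb : b ∈ Icc (0:ℝ) E.qbar) : IntervalIntegrable D.P MeasureTheory.volume a b :=
  (D.P_cont.mono (uIcc_subset_Icc ha hb)).intervalIntegrable

/-- (L1) `V̲(q) − θu q ≤ G*` for `q ∈ [0, qbar]`. -/
lemma L1 (E : Env) {q : ℝ} (hq : q ∈ Icc (0:ℝ) E.qbar) :
    E.Vl q - E.θu * q ≤ E.Gstar := by
  have hsplit : E.Vl q = E.Vl E.ql + ∫ s in E.ql..q, E.Pl s := by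
    rw [Env.Vl, Env.Vl]
    rw [intervalIntegral.integral_add_adjacent_intervals
      (Pl_intInt E (zero_mem E) (ql_mem E)) (Pl_intInt E (ql_mem E) hq)]
  rw [hsplit, Env.Gstar]
  have key : (∫ s in E.ql..q, E.Pl s) - E.θu * q + E.θu * E.ql ≤ 0 := by
    rcases le_total q E.ql with h | h
    · -- q ≤ ql : -∫_q^{ql} Pl + θu (ql - q) ≤ 0, i.e. θu(ql - q) ≤ ∫_q^{ql} Pl
      rw [intervalIntegral.integral_symm]
      have : (E.ql - q) * E.θu ≤ ∫ s in q..E.ql, E.Pl s := by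
        apply const_le_integral h (Pl_intInt E hq (ql_mem E))
        intro x hx
        have hxm : x ∈ Icc (0:ℝ) E.qbar := ⟨hq.1.trans hx.1, hx.2.trans (ql_mem E).2⟩
        rcases eq_or_lt_of_le hx.2 with h' | h'
        · rw [h', Pl_ql E]
        · rw [← Pl_ql E]; exact (E.Pl_anti hxm (ql_mem E) h').le
      nlinarith [this]
    · -- ql ≤ q : ∫_{ql}^q Pl ≤ θu (q - ql)
      have : (∫ s in E.ql..q, E.Pl s) ≤ (q - E.ql) * E.θu := by
        apply integral_le_const h (Pl_intInt E (ql_mem E) hq)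
        intro x hx
        have hxm : x ∈ Icc (0:ℝ) E.qbar := ⟨(ql_mem E).1.trans hx.1, hx.2.trans hq.2⟩
        rcases eq_or_lt_of_le hx.1 with h' | h'
        · rw [← h', Pl_ql E]
        · rw [← Pl_ql E]; exact (E.Pl_anti (ql_mem E) hxm h').le
      nlinarith [this]
  linarith [key]

/-- (L1s) strict version: `q ≠ ql` implies strict inequality. -/
lemma L1s (E : Env) {q : ℝ} (hq : q ∈ Icc (0:ℝ) E.qbar) (hne : q ≠ E.ql) :
    E.Vl q - E.θu * q < E.Gstar := by
  have hsplit : E.Vl q = E.Vl E.ql + ∫ s in E.ql..q, E.Pl s := by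
    rw [Env.Vl, Env.Vl]
    rw [intervalIntegral.integral_add_adjacent_intervals
      (Pl_intInt E (zero_mem E) (ql_mem E)) (Pl_intInt E (ql_mem E) hq)]
  rw [hsplit, Env.Gstar]
  have key : (∫ s in E.ql..q, E.Pl s) - E.θu * q + E.θu * E.ql < 0 := by
    rcases lt_or_gt_of_ne hne with h | h
    · -- q < ql
      set m := (q + E.ql) / 2 with hm
      have hqm : q < m := by rw [hm]; linarith
      have hmql : m < E.ql := by rw [hm]; linarith
      have hmmem : m ∈ Icc (0:ℝ) E.qbar := ⟨hq.1.trans hqm.le, hmql.le.trans (ql_mem E).2⟩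
      have hPlm : E.θu < E.Pl m := by
        rw [← Pl_ql E]; exact E.Pl_anti hmmem (ql_mem E) hmql
      rw [intervalIntegral.integral_symm]
      have hsplit2 : (∫ s in q..E.ql, E.Pl s) =
          (∫ s in q..m, E.Pl s) + ∫ s in m..E.ql, E.Pl s :=
        (intervalIntegral.integral_add_adjacent_intervals
          (Pl_intInt E hq hmmem) (Pl_intInt E hmmem (ql_mem E))).symm
      have h1 : (m - q) * E.Pl m ≤ ∫ s in q..m, E.Pl s := by
        apply const_le_integral hqm.le (Pl_intInt E hq hmmem)
        intro x hx
        rcases eq_or_lt_of_le hx.2 with h' | h'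
        · rw [h']
        · exact (E.Pl_anti ⟨hq.1.trans hx.1, hx.2.trans hmmem.2⟩ hmmem h').le
      have h2 : (E.ql - m) * E.θu ≤ ∫ s in m..E.ql, E.Pl s := by
        apply const_le_integral hmql.le (Pl_intInt E hmmem (ql_mem E))
        intro x hx
        have hxm : x ∈ Icc (0:ℝ) E.qbar := ⟨hmmem.1.trans hx.1, hx.2.trans (ql_mem E).2⟩
        rcases eq_or_lt_of_le hx.2 with h' | h'
        · rw [h', Pl_ql E]
        · rw [← Pl_ql E]; exact (E.Pl_anti hxm (ql_mem E) h').le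
      nlinarith [h1, h2]
    · -- ql < q
      set m := (E.ql + q) / 2 with hm
      have hqlm : E.ql < m := by rw [hm]; linarith
      have hmq : m < q := by rw [hm]; linarith
      have hmmem : m ∈ Icc (0:ℝ) E.qbar := ⟨(ql_mem E).1.trans hqlm.le, hmq.le.trans hq.2⟩
      have hPlm : E.Pl m < E.θu := by
        rw [← Pl_ql E]; exact E.Pl_anti (ql_mem E) hmmem hqlm
      have hsplit2 : (∫ s in E.ql..q, E.Pl s) =
          (∫ s in E.ql..m, E.Pl s) + ∫ s in m..q, E.Pl s :=
        (intervalIntegral.integral_add_adjacent_intervals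
          (Pl_intInt E (ql_mem E) hmmem) (Pl_intInt E hmmem hq)).symm
      have h1 : (∫ s in E.ql..m, E.Pl s) ≤ (m - E.ql) * E.θu := by
        apply integral_le_const hqlm.le (Pl_intInt E (ql_mem E) hmmem)
        intro x hx
        have hxm : x ∈ Icc (0:ℝ) E.qbar := ⟨(ql_mem E).1.trans hx.1, hx.2.trans hmmem.2⟩
        rcases eq_or_lt_of_le hx.1 with h' | h'
        · rw [← h', Pl_ql E]
        · rw [← Pl_ql E]; exact (E.Pl_anti (ql_mem E) hxm h').le
      have h2 : (∫ s in m..q, E.Pl s) ≤ (q - m) * E.Pl m := by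
        apply integral_le_const hmq.le (Pl_intInt E hmmem hq)
        intro x hx
        rcases eq_or_lt_of_le hx.1 with h' | h'
        · rw [← h']
        · exact (E.Pl_anti hmmem ⟨hmmem.1.trans hx.1, hx.2.trans hq.2⟩ h').le
      nlinarith [h1, h2]
  linarith [key]

lemma Gstar_pos (E : Env) : 0 < E.Gstar := by
  have h0 : E.Vl 0 - E.θu * 0 < E.Gstar :=
    L1s E (zero_mem E) (ne_of_lt (ql_pos E))
  have : E.Vl 0 = 0 := by rw [Env.Vl, intervalIntegral.integral_same]
  rw [this] at h0
  linarith

/-- (L2) `G* ≤ V_D(D(θu)) − θu · D(θu)` for every demand `D`. -/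
lemma L2 (E : Env) (D : Demand E) :
    E.Gstar ≤ D.V (D.D E.θu) - E.θu * D.D E.θu := by
  set q := D.D E.θu with hqdef
  have hq : q ∈ Icc (0:ℝ) E.qbar := D_mem D E.θu
  have hqlq : E.ql ≤ q := by
    apply le_D D (ql_mem E)
    rw [← Pl_ql E]; exact D.P_ge E.ql (ql_mem E)
  have hθuPq : E.θu ≤ D.P q := by
    by_cases hv : E.θu < D.P E.qbar
    · have : q = E.qbar := D.D_low E.θu hv
      rw [this]; exact hv.le
    · obtain ⟨_, hi⟩ := D.D_inv E.θu (not_lt.mp hv) D.P0.le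
      rw [← hqdef] at hi
      rw [hi]
  have hsplit : D.V q = (∫ s in (0:ℝ)..E.ql, D.P s) + ∫ s in E.ql..q, D.P s := by
    rw [Demand.V]
    rw [intervalIntegral.integral_add_adjacent_intervals
      (P_intInt D (zero_mem E) (ql_mem E)) (P_intInt D (ql_mem E) hq)]
  have h1 : E.Vl E.ql ≤ ∫ s in (0:ℝ)..E.ql, D.P s := by
    rw [Env.Vl]
    apply intervalIntegral.integral_mono_on (ql_mem E).1
      (Pl_intInt E (zero_mem E) (ql_mem E)) (P_intInt D (zero_mem E) (ql_mem E))
    intro x hx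
    exact D.P_ge x ⟨hx.1, hx.2.trans (ql_mem E).2⟩
  have h2 : (q - E.ql) * E.θu ≤ ∫ s in E.ql..q, D.P s := by
    apply const_le_integral hqlq (P_intInt D (ql_mem E) hq)
    intro x hx
    have hxm : x ∈ Icc (0:ℝ) E.qbar := ⟨(ql_mem E).1.trans hx.1, hx.2.trans hq.2⟩
    calc E.θu ≤ D.P q := hθuPq
    _ ≤ D.P x := by
      rcases eq_or_lt_of_le hx.2 with h' | h'
      · rw [h']
      · exact (D.P_anti hxm hq h').le
  rw [hsplit, Env.Gstar]
  nlinarith [h1, h2]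

end PSLAux2

namespace PSLAux3

open PSLAux PSLAux2 MeasureTheory

variable {E : Env}

lemma tech_dirac (E : Env) {θ : ℝ} (hθ : θ ∈ E.Θ) : E.IsTech (Measure.dirac θ) := by
  constructor
  · infer_instance
  · have hm : MeasurableSet (E.Θᶜ) := by
      rw [Env.Θ]; exact measurableSet_Icc.compl
    rw [MeasureTheory.Measure.dirac_apply' _ hm]
    simp only [Set.indicator_apply_eq_zero]
    intro hc
    exact absurd hθ hc

lemma Wt_dirac (E : Env) (p : ℝ → ℝ) (t : ℝ → Demand E → ℝ) (D : Demand E) (θ : ℝ) :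
    E.Wt p t D (Measure.dirac θ) = E.wt p t θ D := by
  rw [Env.Wt, integral_dirac]

lemma DlDemand_D (E : Env) : (E.DlDemand).D = E.Dl := rfl

lemma DlDemand_V (E : Env) : (E.DlDemand).V = E.Vl := rfl

/-- Claim A: every EPIC and EPIR price regulation has guarantee at most `G*`. -/
lemma claimA (E : Env) (p : ℝ → ℝ) (t : ℝ → Demand E → ℝ)
    (h : E.IsAdmissiblePR p t) : E.Gt p t ≤ E.Gstar := by
  have hrent : 0 ≤ E.rent p t E.θu E.DlDemand := h.2.2 E.θu (theta_u_mem E) E.DlDemand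
  have hwt : E.wt p t E.θu E.DlDemand ≤ E.Gstar := by
    rw [Env.wt]
    have hq : (E.DlDemand).D (p E.θu) ∈ Icc (0:ℝ) E.qbar := D_mem E.DlDemand (p E.θu)
    have := L1 E hq
    rw [DlDemand_V E]
    linarith [this]
  have hmem : E.wt p t E.θu E.DlDemand ∈
      {w : ℝ | ∃ (D : Demand E) (μ : Measure ℝ), E.IsTech μ ∧ w = E.Wt p t D μ} :=
    ⟨E.DlDemand, Measure.dirac E.θu, tech_dirac E (theta_u_mem E),
      (Wt_dirac E p t E.DlDemand E.θu).symm⟩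
  rw [Env.Gt]
  by_cases hb : BddBelow {w : ℝ | ∃ (D : Demand E) (μ : Measure ℝ),
      E.IsTech μ ∧ w = E.Wt p t D μ}
  · exact (csInf_le hb hmem).trans hwt
  · rw [csInf_of_not_bddBelow hb, Real.sInf_empty]
    exact (Gstar_pos E).le

/-- The constant-price regulation `p ≡ θu`. -/
def pB (E : Env) : ℝ → ℝ := fun _ => E.θu

def tB (E : Env) : ℝ → Demand E → ℝ := fun _ D => E.θu * D.D E.θu

lemma θu_pos (E : Env) : 0 < E.θu := E.θl_pos.trans E.θlu

lemma claimB_admissible (E : Env) : E.IsAdmissiblePR (pB E) (tB E) := by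
  refine ⟨⟨fun θ _ => (θu_pos E).le, fun θ _ D => ?_⟩, ?_, ?_⟩
  · exact mul_nonneg (θu_pos E).le (D_mem D E.θu).1
  · intro θ hθ θ' hθ' D
    simp only [Env.rent, pB, tB]
    exact le_refl _
  · intro θ hθ D
    simp only [Env.rent, pB, tB]
    have h1 : θ ≤ E.θu := hθ.2
    have h2 : 0 ≤ D.D E.θu := (D_mem D E.θu).1
    nlinarith

lemma claimB_Wt (E : Env) (D : Demand E) (μ : Measure ℝ) (htech : E.IsTech μ) :
    E.Wt (pB E) (tB E) D μ = D.V (D.D E.θu) - E.θu * D.D E.θu := by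
  haveI : IsProbabilityMeasure μ := htech.1
  have hfun : (fun θ => E.wt (pB E) (tB E) θ D) =
      fun _ => D.V (D.D E.θu) - E.θu * D.D E.θu := by
    funext θ
    simp only [Env.wt, Env.rent, pB, tB]
    ring
  rw [Env.Wt, hfun, integral_const, probReal_univ, one_smul]

lemma claimB_Gt (E : Env) : E.Gt (pB E) (tB E) = E.Gstar := by
  have hset : ∀ w ∈ {w : ℝ | ∃ (D : Demand E) (μ : Measure ℝ),
      E.IsTech μ ∧ w = E.Wt (pB E) (tB E) D μ}, E.Gstar ≤ w := by
    rintro w ⟨D, μ, htech, rfl⟩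
    rw [claimB_Wt E D μ htech]
    exact L2 E D
  have hmem : E.Gstar ∈ {w : ℝ | ∃ (D : Demand E) (μ : Measure ℝ),
      E.IsTech μ ∧ w = E.Wt (pB E) (tB E) D μ} := by
    refine ⟨E.DlDemand, Measure.dirac E.θu, tech_dirac E (theta_u_mem E), ?_⟩
    rw [claimB_Wt E E.DlDemand _ (tech_dirac E (theta_u_mem E))]
    rw [DlDemand_V E, DlDemand_D E]
    rfl
  rw [Env.Gt]
  exact le_antisymm (csInf_le ⟨E.Gstar, hset⟩ hmem) (le_csInf ⟨E.Gstar, hmem⟩ hset)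

end PSLAux3

namespace PSLAux4

open PSLAux PSLAux2 PSLAux3 MeasureTheory intervalIntegral

variable {E : Env}

/-- clamp to `Θ`. -/
def clampΘ (E : Env) (θ : ℝ) : ℝ := max E.θl (min θ E.θu)

lemma clampΘ_mem (E : Env) (θ : ℝ) : clampΘ E θ ∈ E.Θ :=
  ⟨le_max_left _ _, max_le E.θlu.le (min_le_right _ _)⟩

lemma clampΘ_id (E : Env) {θ : ℝ} (hθ : θ ∈ E.Θ) : clampΘ E θ = θ := by
  rw [clampΘ, min_eq_left hθ.2, max_eq_right hθ.1]

lemma clampΘ_mono (E : Env) : Monotone (clampΘ E) :=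
  monotone_const.max (monotone_id.min monotone_const)

lemma clampΘ_cont (E : Env) : Continuous (clampΘ E) :=
  continuous_const.max (continuous_id.min continuous_const)

lemma V_contOn (D : Demand E) : ContinuousOn D.V (Icc 0 E.qbar) := by
  have hint : IntegrableOn D.P (uIcc 0 E.qbar) volume := by
    rw [uIcc_of_le E.qbar_pos.le]
    exact D.P_cont.integrableOn_compact isCompact_Icc
  have := continuousOn_primitive_interval (a := (0:ℝ)) (b := E.qbar) hint
  rw [uIcc_of_le E.qbar_pos.le] at this
  exact this

/-- Core of the sufficiency argument: under (a), (b), (d), every possible ex-ante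
welfare is at least `G*`. -/
lemma core_lb (E : Env) (p : ℝ → ℝ) (t : ℝ → Demand E → ℝ)
    (ha : MonotoneOn p E.Θ)
    (hb : ∀ θ ∈ E.Θ, ∀ D : Demand E,
      E.rent p t θ D = E.rent p t E.θu D + ∫ y in θ..E.θu, D.D (p y))
    (hd : ∀ θ ∈ E.Θ, ∀ D : Demand E, E.Gstar ≤ E.wt p t θ D)
    (D : Demand E) (μ : Measure ℝ) (htech : E.IsTech μ) :
    E.Gstar ≤ E.Wt p t D μ := by
  haveI : IsProbabilityMeasure μ := htech.1
  set gc : ℝ → ℝ := fun y => D.D (p (clampΘ E y)) with hgc_def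
  have hgc_anti : Antitone gc := by
    intro x y hxy
    exact D_anti D (ha (clampΘ_mem E x) (clampΘ_mem E y) (clampΘ_mono E hxy))
  have hgc_mem : ∀ y, gc y ∈ Icc (0:ℝ) E.qbar := fun y => D_mem D _
  have hgc_int : ∀ a b : ℝ, IntervalIntegrable gc volume a b := fun a b =>
    hgc_anti.intervalIntegrable
  -- globally continuous version of V
  set Vc : ℝ → ℝ := fun x => D.V (max 0 (min x E.qbar)) with hVc_def
  have hVc_cont : Continuous Vc := by
    apply (V_contOn D).comp_continuous
      (continuous_const.max (continuous_id.min continuous_const))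
    intro x
    exact ⟨le_max_left _ _, max_le E.qbar_pos.le (min_le_right _ _)⟩
  have hVc_eq : ∀ y, Vc (gc y) = D.V (gc y) := by
    intro y
    have h := hgc_mem y
    rw [hVc_def]
    simp only []
    rw [min_eq_left h.2, max_eq_right h.1]
  -- primitive of gc
  set prim : ℝ → ℝ := fun x => ∫ y in x..E.θu, gc y with hprim_def
  have hprim_cont : Continuous (fun θ => prim (clampΘ E θ)) := by
    have hint : IntegrableOn gc (uIcc E.θl E.θu) volume := by
      rw [uIcc_of_le E.θlu.le]
      exact (intervalIntegrable_iff_integrableOn_Icc_of_le E.θlu.le).mp (hgc_int _ _)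
    have hcOn : ContinuousOn prim (uIcc E.θl E.θu) :=
      continuousOn_primitive_interval_left hint
    apply hcOn.comp_continuous (clampΘ_cont E)
    intro x
    rw [uIcc_of_le E.θlu.le]
    exact clampΘ_mem E x
  -- the comparison function
  set F : ℝ → ℝ := fun θ =>
    D.V (gc θ) - clampΘ E θ * gc θ - (E.rent p t E.θu D + prim (clampΘ E θ)) with hF_def
  have hgc_meas : Measurable gc := hgc_anti.measurable
  have hF_meas : Measurable F := by
    have h2 : Measurable fun θ => D.V (gc θ) := by
      have : (fun θ => D.V (gc θ)) = fun θ => Vc (gc θ) := by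
        funext y; rw [hVc_eq y]
      rw [this]
      exact hVc_cont.measurable.comp hgc_meas
    have h3 : Measurable fun θ => clampΘ E θ * gc θ :=
      ((clampΘ_cont E).measurable).mul hgc_meas
    have h4 : Measurable fun θ => E.rent p t E.θu D + prim (clampΘ E θ) :=
      measurable_const.add hprim_cont.measurable
    exact (h2.sub h3).sub h4
  -- F agrees with wt on Θ
  have hFwt : ∀ θ ∈ E.Θ, F θ = E.wt p t θ D := by
    intro θ hθ
    have hcl : clampΘ E θ = θ := clampΘ_id E hθ
    have hIc : prim (clampΘ E θ) = ∫ y in θ..E.θu, D.D (p y) := by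
      rw [hcl, hprim_def]
      apply intervalIntegral.integral_congr
      intro y hy
      rw [uIcc_of_le hθ.2] at hy
      have hyΘ : y ∈ E.Θ := ⟨hθ.1.trans hy.1, hy.2⟩
      simp only [hgc_def]
      rw [clampΘ_id E hyΘ]
    rw [hF_def]
    simp only []
    rw [hIc, hcl, Env.wt, hb θ hθ D]
    simp only [hgc_def]
    rw [clampΘ_id E hθ]
  -- F is everywhere at least Gstar
  have hFge : ∀ θ, E.Gstar ≤ F θ := by
    intro θ
    have hclm := clampΘ_mem E θ
    have hid : clampΘ E (clampΘ E θ) = clampΘ E θ := clampΘ_id E hclm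
    have : F (clampΘ E θ) = F θ := by
      rw [hF_def]
      simp only [hgc_def]
      rw [hid]
    rw [← this, hFwt _ hclm]
    exact hd _ hclm D
  -- F is bounded
  obtain ⟨MV, hMV⟩ := isCompact_Icc.exists_bound_of_continuousOn (V_contOn D)
  have hFbdd : ∀ θ, ‖F θ‖ ≤ MV + E.θu * E.qbar + (|E.rent p t E.θu D| +
      E.qbar * (E.θu - E.θl)) := by
    intro θ
    have hA : |D.V (gc θ)| ≤ MV := by
      have := hMV (gc θ) (hgc_mem θ)
      rwa [Real.norm_eq_abs] at this
    have hclm := clampΘ_mem E θ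
    have hB : |clampΘ E θ * gc θ| ≤ E.θu * E.qbar := by
      rw [abs_mul]
      apply mul_le_mul
      · rw [abs_of_nonneg (E.θl_pos.le.trans hclm.1)]; exact hclm.2
      · rw [abs_of_nonneg (hgc_mem θ).1]; exact (hgc_mem θ).2
      · exact abs_nonneg _
      · exact (θu_pos E).le
    have hC : |prim (clampΘ E θ)| ≤ E.qbar * (E.θu - E.θl) := by
      rw [hprim_def]
      simp only []
      have h1 : ‖∫ y in clampΘ E θ..E.θu, gc y‖ ≤ E.qbar * |E.θu - clampΘ E θ| := by
        apply intervalIntegral.norm_integral_le_of_norm_le_const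
        intro x _
        rw [Real.norm_eq_abs, abs_of_nonneg (hgc_mem x).1]
        exact (hgc_mem x).2
      rw [Real.norm_eq_abs] at h1
      apply h1.trans
      apply mul_le_mul_of_nonneg_left _ E.qbar_pos.le
      rw [abs_of_nonneg (by linarith [hclm.2] : (0:ℝ) ≤ E.θu - clampΘ E θ)]
      linarith [hclm.1]
    rw [Real.norm_eq_abs, hF_def]
    simp only []
    have e1 := neg_abs_le (D.V (gc θ)); have e2 := le_abs_self (D.V (gc θ))
    have e3 := neg_abs_le (clampΘ E θ * gc θ); have e4 := le_abs_self (clampΘ E θ * gc θ)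
    have e5 := neg_abs_le (E.rent p t E.θu D); have e6 := le_abs_self (E.rent p t E.θu D)
    have e7 := neg_abs_le (prim (clampΘ E θ)); have e8 := le_abs_self (prim (clampΘ E θ))
    rw [abs_le]
    constructor <;> nlinarith [hA, hB, hC]
  -- F is integrable
  have hFint : Integrable F μ := by
    refine ⟨hF_meas.aestronglyMeasurable, ?_⟩
    exact HasFiniteIntegral.of_bounded (ae_of_all μ hFbdd)
  -- wt = F a.e.
  have hae : (fun θ => E.wt p t θ D) =ᵐ[μ] F := by
    rw [Filter.eventuallyEq_iff_exists_mem]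
    refine ⟨E.Θ, ?_, fun θ hθ => (hFwt θ hθ).symm⟩
    rw [mem_ae_iff]
    exact htech.2
  rw [Env.Wt, integral_congr_ae hae]
  have := integral_mono (integrable_const E.Gstar) hFint hFge
  rwa [MeasureTheory.integral_const, probReal_univ, one_smul] at this
end PSLAux4

namespace PSLAux5

open PSLAux PSLAux2 PSLAux3 MeasureTheory intervalIntegral Finset

variable {E : Env}

/-- If the guarantee is at least `G*`, then ex-post welfare is at least `G*` pointwise. -/
lemma nec_d (E : Env) (p : ℝ → ℝ) (t : ℝ → Demand E → ℝ)
    (hGt : E.Gstar ≤ E.Gt p t) :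
    ∀ θ ∈ E.Θ, ∀ D : Demand E, E.Gstar ≤ E.wt p t θ D := by
  intro θ hθ D
  have hmem : E.wt p t θ D ∈
      {w : ℝ | ∃ (D : Demand E) (μ : Measure ℝ), E.IsTech μ ∧ w = E.Wt p t D μ} :=
    ⟨D, Measure.dirac θ, tech_dirac E hθ, (Wt_dirac E p t D θ).symm⟩
  by_cases hb : BddBelow {w : ℝ | ∃ (D : Demand E) (μ : Measure ℝ),
      E.IsTech μ ∧ w = E.Wt p t D μ}
  · exact hGt.trans (csInf_le hb hmem)
  · exfalso
    rw [Env.Gt, csInf_of_not_bddBelow hb, Real.sInf_empty] at hGt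
    exact absurd hGt (not_le.mpr (Gstar_pos E))

/-- necessity of the top conditions: zero rent for `θu` at `D̲`, efficient quantity,
and `p θu = θu`. -/
lemma nec_top (E : Env) (p : ℝ → ℝ) (t : ℝ → Demand E → ℝ)
    (hadm : E.IsAdmissiblePR p t)
    (hd : ∀ θ ∈ E.Θ, ∀ D : Demand E, E.Gstar ≤ E.wt p t θ D) :
    E.rent p t E.θu E.DlDemand = 0 ∧ E.Dl (p E.θu) = E.ql ∧ p E.θu = E.θu := by
  have h1 := hd E.θu (theta_u_mem E) E.DlDemand
  rw [Env.wt, DlDemand_V E, DlDemand_D E] at h1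
  have h2 : E.Vl (E.Dl (p E.θu)) - E.θu * E.Dl (p E.θu) ≤ E.Gstar :=
    L1 E (by rw [← DlDemand_D E]; exact D_mem E.DlDemand (p E.θu))
  have hrent0 : 0 ≤ E.rent p t E.θu E.DlDemand :=
    hadm.2.2 E.θu (theta_u_mem E) E.DlDemand
  have hrent : E.rent p t E.θu E.DlDemand = 0 := by linarith
  have hq : E.Dl (p E.θu) = E.ql := by
    by_contra hne
    have := L1s E (by rw [← DlDemand_D E]; exact D_mem E.DlDemand (p E.θu)) hne
    linarith
  refine ⟨hrent, hq, ?_⟩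
  by_cases hh : E.Pl 0 < p E.θu
  · exfalso
    have := E.Dl_high _ hh
    rw [this] at hq
    exact absurd hq ((ql_pos E).ne)
  by_cases hl : p E.θu < E.Pl E.qbar
  · exfalso
    have := E.Dl_low _ hl
    rw [this] at hq
    exact absurd hq (ne_of_gt (ql_lt E))
  have := (E.Dl_inv (p E.θu) (not_lt.mp hl) (not_lt.mp hh)).2
  rw [hq, Pl_ql E] at this
  exact this.symm

/-- EPIC implies the demand along the price schedule is antitone on `Θ`. -/
lemma EPIC_g_anti (E : Env) (p : ℝ → ℝ) (t : ℝ → Demand E → ℝ)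
    (hEPIC : E.EPIC p t) (D : Demand E) :
    AntitoneOn (fun y => D.D (p y)) E.Θ := by
  intro a ha b hb hab
  rcases eq_or_lt_of_le hab with h | h
  · rw [h]
  have h1 := hEPIC a ha b hb D
  have h2 := hEPIC b hb a ha D
  rw [Env.rent] at h1 h2
  simp only []
  nlinarith [h1, h2]

/-- The envelope inequality from EPIC. -/
lemma EPIC_key (E : Env) (p : ℝ → ℝ) (t : ℝ → Demand E → ℝ)
    (hEPIC : E.EPIC p t) (D : Demand E) {a b : ℝ} (ha : a ∈ E.Θ) (hb : b ∈ E.Θ) :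
    E.rent p t b D + (b - a) * D.D (p b) ≤ E.rent p t a D := by
  have h1 := hEPIC a ha b hb D
  simp only [Env.rent] at h1 ⊢
  nlinarith [h1]

/-- The envelope formula (b). -/
lemma envelope (E : Env) (p : ℝ → ℝ) (t : ℝ → Demand E → ℝ)
    (hEPIC : E.EPIC p t) {θ : ℝ} (hθ : θ ∈ E.Θ) (D : Demand E) :
    E.rent p t θ D = E.rent p t E.θu D + ∫ y in θ..E.θu, D.D (p y) := by
  set g : ℝ → ℝ := fun y => D.D (p y) with hg_def
  set u : ℝ → ℝ := fun y => E.rent p t y D with hu_def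
  have hganti : AntitoneOn g E.Θ := EPIC_g_anti E p t hEPIC D
  clear_value g u
  rcases eq_or_lt_of_le hθ.2 with heq | hlt
  · rw [heq, intervalIntegral.integral_same]; ring
  set L : ℝ := E.θu - θ with hL
  have hL0 : 0 < L := by rw [hL]; linarith
  clear_value L
  have key : ∀ n : ℕ, 0 < n →
      |u θ - u E.θu - ∫ y in θ..E.θu, g y| ≤ L * E.qbar / n := by
    intro n hn
    have hn' : (0:ℝ) < n := Nat.cast_pos.mpr hn
    set x : ℕ → ℝ := fun i => θ + i * (L / n) with hx_def
    have hx0 : x 0 = θ := by simp [hx_def]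
    have hxn : x n = E.θu := by
      rw [hx_def]
      field_simp
      rw [hL]; ring
    have hstep : ∀ i : ℕ, x (i + 1) - x i = L / n := by
      intro i
      rw [hx_def]
      push_cast
      ring
    have hxmem : ∀ i : ℕ, i ≤ n → x i ∈ E.Θ := by
      intro i hi
      constructor
      · have : (0:ℝ) ≤ i * (L / n) := by positivity
        rw [hx_def]; simp only []; linarith [hθ.1]
      · have : x i ≤ x n := by
          rw [hx_def]
          simp only []
          have : (i:ℝ) ≤ n := Nat.cast_le.mpr hi
          have hpos : (0:ℝ) ≤ L / n := by positivity
          nlinarith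
        rw [hxn] at this; exact this
    clear_value x
    have hxle : ∀ i : ℕ, x i ≤ x (i + 1) := by
      intro i
      have h1 := hstep i
      have hpos : (0:ℝ) ≤ L / (n:ℝ) := by positivity
      linarith [h1, hpos]
    -- piecewise integrability
    have hint : ∀ k : ℕ, k < n → IntervalIntegrable g volume (x k) (x (k + 1)) := by
      intro k hk
      apply AntitoneOn.intervalIntegrable
      apply hganti.mono
      rw [uIcc_of_le (hxle k)]
      intro y hy
      exact ⟨(hxmem k hk.le).1.trans hy.1, hy.2.trans (hxmem (k+1) hk).2⟩
    -- per-piece bounds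
    have hpiece : ∀ i : ℕ, i < n →
        |(u (x i) - u (x (i + 1))) - ∫ y in x i..x (i + 1), g y| ≤
          (L / n) * (g (x i) - g (x (i + 1))) := by
      intro i hi
      have hmi := hxmem i hi.le
      have hmi1 := hxmem (i + 1) hi
      have hk1 := EPIC_key E p t hEPIC D hmi hmi1
      have hk2 := EPIC_key E p t hEPIC D hmi1 hmi
      have hstepi := hstep i
      rw [hstepi] at hk1
      have hstepi' : x i - x (i + 1) = -(L / (n:ℝ)) := by
        have := hstep i
        linarith [this]
      rw [hstepi'] at hk2
      have hA1 : (L / n) * g (x (i + 1)) ≤ u (x i) - u (x (i + 1)) := by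
        simp only [hu_def, hg_def]
        linarith [hk1]
      have hA2 : u (x i) - u (x (i + 1)) ≤ (L / n) * g (x i) := by
        simp only [hu_def, hg_def]
        nlinarith [hk2]
      have hB1 : (L / n) * g (x (i + 1)) ≤ ∫ y in x i..x (i + 1), g y := by
        have := const_le_integral (hxle i) (hint i hi) (fun y hy => by
          exact hganti ⟨hmi.1.trans hy.1, hy.2.trans hmi1.2⟩ hmi1 hy.2)
        rw [hstepi] at this
        linarith [this]
      have hB2 : (∫ y in x i..x (i + 1), g y) ≤ (L / n) * g (x i) := by
        have := integral_le_const (hxle i) (hint i hi) (fun y hy => by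
          exact hganti hmi ⟨hmi.1.trans hy.1, hy.2.trans hmi1.2⟩ hy.1)
        rw [hstepi] at this
        linarith [this]
      rw [abs_le]
      constructor <;> linarith
    -- telescoping sums
    have hsumu : ∑ i ∈ Finset.range n, (u (x i) - u (x (i + 1))) = u θ - u E.θu := by
      rw [Finset.sum_range_sub' (fun i => u (x i)) n, hx0, hxn]
    have hsumint : ∑ i ∈ Finset.range n, (∫ y in x i..x (i + 1), g y) =
        ∫ y in θ..E.θu, g y := by
      have := intervalIntegral.sum_integral_adjacent_intervals hint
      rw [hx0, hxn] at this
      exact this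
    have hsumg : ∑ i ∈ Finset.range n, (L / n) * (g (x i) - g (x (i + 1))) =
        (L / n) * (g θ - g E.θu) := by
      rw [← Finset.mul_sum, Finset.sum_range_sub' (fun i => g (x i)) n, hx0, hxn]
    have habs : |u θ - u E.θu - ∫ y in θ..E.θu, g y| ≤ (L / n) * (g θ - g E.θu) := by
      rw [← hsumu, ← hsumint, ← Finset.sum_sub_distrib, ← hsumg]
      exact (Finset.abs_sum_le_sum_abs _ _).trans
        (Finset.sum_le_sum fun i hi => hpiece i (Finset.mem_range.mp hi))
    apply habs.trans
    have hgmem1 := D_mem D (p θ)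
    have hgmem2 := D_mem D (p E.θu)
    have : g θ - g E.θu ≤ E.qbar := by
      simp only [hg_def]
      linarith [hgmem1.2, hgmem2.1]
    calc (L / n) * (g θ - g E.θu) ≤ (L / n) * E.qbar := by
          apply mul_le_mul_of_nonneg_left this (by positivity)
      _ = L * E.qbar / n := by ring
  -- conclude
  have hzero : |u θ - u E.θu - ∫ y in θ..E.θu, g y| ≤ 0 := by
    apply le_of_forall_pos_le_add
    intro ε hε
    obtain ⟨n, hne⟩ := exists_nat_gt (L * E.qbar / ε)
    have hn0 : 0 < n := by
      by_contra hc
      push_neg at hc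
      interval_cases n
      simp only [Nat.cast_zero] at hne
      have hpos2 : 0 < L * E.qbar / ε := div_pos (mul_pos hL0 E.qbar_pos) hε
      linarith
    have := key n hn0
    have hn' : (0:ℝ) < n := Nat.cast_pos.mpr hn0
    have h2 : L * E.qbar / n < ε := by
      rw [div_lt_iff₀ hn']
      rw [div_lt_iff₀ hε] at hne
      nlinarith [hne]
    linarith
  have := abs_nonneg (u θ - u E.θu - ∫ y in θ..E.θu, g y)
  have h0 : |u θ - u E.θu - ∫ y in θ..E.θu, g y| = 0 := le_antisymm hzero this
  rw [abs_eq_zero] at h0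
  simp only [hu_def, hg_def] at h0 ⊢
  linarith [h0]

end PSLAux5

namespace PSLAux6

open PSLAux PSLAux2 PSLAux3 PSLAux5 MeasureTheory intervalIntegral

variable {E : Env}

/-- Any admissible inverse demand induces a demand in `𝒟`. -/
lemma exists_demand (E : Env) (P : ℝ → ℝ) (h1 : StrictAntiOn P (Icc 0 E.qbar))
    (h2 : ContinuousOn P (Icc 0 E.qbar)) (h3 : ∀ s ∈ Icc (0:ℝ) E.qbar, E.Pl s ≤ P s)
    (h4 : E.θu < P 0) (h5 : P E.qbar < E.θl) :
    ∃ Dm : Demand E, Dm.P = P := by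
  have hivt : ∀ v, P E.qbar ≤ v → v ≤ P 0 → ∃ x ∈ Icc (0:ℝ) E.qbar, P x = v := by
    intro v hv1 hv2
    have himg := intermediate_value_Icc' E.qbar_pos.le h2
    obtain ⟨x, hx, hPx⟩ := himg ⟨hv1, hv2⟩
    exact ⟨x, hx, hPx⟩
  classical
  set Dfun : ℝ → ℝ := fun v =>
    if h : P E.qbar ≤ v ∧ v ≤ P 0 then Classical.choose (hivt v h.1 h.2)
    else if P 0 < v then 0 else E.qbar with hDfun
  have hDinv : ∀ v, P E.qbar ≤ v → v ≤ P 0 →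
      Dfun v ∈ Icc (0:ℝ) E.qbar ∧ P (Dfun v) = v := by
    intro v hv1 hv2
    rw [hDfun]
    simp only [dif_pos (And.intro hv1 hv2)]
    obtain ⟨hx, hPx⟩ := Classical.choose_spec (hivt v hv1 hv2)
    exact ⟨hx, hPx⟩
  have hDhigh : ∀ v, P 0 < v → Dfun v = 0 := by
    intro v hv
    rw [hDfun]
    have : ¬(P E.qbar ≤ v ∧ v ≤ P 0) := fun h => absurd hv (not_lt.mpr h.2)
    simp only [dif_neg this, if_pos hv]
  have hDlow : ∀ v, v < P E.qbar → Dfun v = E.qbar := by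
    intro v hv
    rw [hDfun]
    have hne : ¬(P E.qbar ≤ v ∧ v ≤ P 0) := fun h => absurd hv (not_lt.mpr h.1)
    have hne2 : ¬(P 0 < v) := not_lt.mpr ((hv.trans (h1 (zero_mem E) (qbar_mem E) E.qbar_pos)).le)
    simp only [dif_neg hne, if_neg hne2]
  have hDlt : Dfun E.θl < E.qbar := by
    obtain ⟨hmem, hinv⟩ := hDinv E.θl h5.le (by linarith [E.θlu, h4])
    rcases eq_or_lt_of_le hmem.2 with h | h
    · exfalso
      rw [h] at hinv
      rw [hinv] at h5
      exact absurd E.θl_pos.le (not_le.mpr (by linarith))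
    · exact h
  exact ⟨⟨P, Dfun, h1, h2, h3, h4, hDinv, hDhigh, hDlow, hDlt⟩, rfl⟩

end PSLAux6

namespace PSLAux7

open PSLAux PSLAux2 PSLAux3 PSLAux5 PSLAux6 MeasureTheory intervalIntegral

variable {E : Env}

/-- Under the necessary top conditions, prices are at most `θu` on `Θ`. -/
lemma p_le_θu (E : Env) (p : ℝ → ℝ) (t : ℝ → Demand E → ℝ)
    (hEPIC : E.EPIC p t) (hqtop : E.Dl (p E.θu) = E.ql) :
    ∀ y ∈ E.Θ, p y ≤ E.θu := by
  intro y hy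
  have hganti := EPIC_g_anti E p t hEPIC E.DlDemand
  have hgeql : E.ql ≤ E.Dl (p y) := by
    have := hganti hy (theta_u_mem E) hy.2
    simp only [DlDemand_D E] at this
    rw [hqtop] at this
    exact this
  by_contra hcon
  push_neg at hcon
  by_cases hA : E.Pl 0 < p y
  · rw [E.Dl_high _ hA] at hgeql
    exact absurd hgeql (not_le.mpr (ql_pos E))
  · have hge : E.Pl E.qbar ≤ p y :=
      le_of_lt ((Pl_qbar_lt E).trans (E.θlu.trans hcon))
    obtain ⟨hmem, hinv⟩ := E.Dl_inv (p y) hge (not_lt.mp hA)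
    rcases eq_or_lt_of_le hgeql with h | h
    · rw [← h, Pl_ql E] at hinv
      exact absurd hinv (ne_of_lt hcon)
    · have := E.Pl_anti (ql_mem E) hmem h
      rw [hinv, Pl_ql E] at this
      exact absurd hcon (not_lt.mpr this.le)

/-- Existence of `q0` close to `qbar` with `Pl q0 < θl`. -/
lemma exists_q0 (E : Env) : ∃ q0 : ℝ, E.ql < q0 ∧ q0 < E.qbar ∧ E.Pl q0 < E.θl := by
  have hc : ContinuousWithinAt E.Pl (Icc 0 E.qbar) E.qbar :=
    E.Pl_cont E.qbar (qbar_mem E)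
  rw [Metric.continuousWithinAt_iff] at hc
  obtain ⟨δ, hδ0, hδ⟩ := hc (E.θl - E.Pl E.qbar) (by linarith [Pl_qbar_lt E])
  set q0 : ℝ := max ((E.ql + E.qbar) / 2) (E.qbar - δ / 2) with hq0
  have h1 : E.ql < q0 := lt_of_lt_of_le (by linarith [ql_lt E]) (le_max_left _ _)
  have h2 : q0 < E.qbar := by
    apply max_lt
    · linarith [ql_lt E, ql_pos E]
    · linarith
  have hq0mem : q0 ∈ Icc (0:ℝ) E.qbar := ⟨((ql_pos E).trans h1).le, h2.le⟩
  have h3 : dist q0 E.qbar < δ := by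
    rw [Real.dist_eq, abs_of_nonpos (by linarith)]
    have : E.qbar - δ / 2 ≤ q0 := le_max_right _ _
    linarith
  have := hδ hq0mem h3
  rw [Real.dist_eq] at this
  have h4 : E.Pl q0 - E.Pl E.qbar < E.θl - E.Pl E.qbar := lt_of_le_of_lt (le_abs_self _) this
  exact ⟨q0, h1, h2, by linarith⟩

set_option maxHeartbeats 1000000 in
/-- Step 1 of monotonicity: in a shortlist regulation, all prices exceed `Pl qbar`. -/
lemma p_gt_Plqbar (E : Env) (p : ℝ → ℝ) (t : ℝ → Demand E → ℝ)
    (hadm : E.IsAdmissiblePR p t)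
    (henv : ∀ θ ∈ E.Θ, ∀ D : Demand E,
      E.rent p t θ D = E.rent p t E.θu D + ∫ y in θ..E.θu, D.D (p y))
    (hd : ∀ θ ∈ E.Θ, ∀ D : Demand E, E.Gstar ≤ E.wt p t θ D)
    (hqtop : E.Dl (p E.θu) = E.ql) :
    ∀ θ0 ∈ E.Θ, E.Pl E.qbar < p θ0 := by
  intro θ0 hθ0
  by_contra hp0
  push_neg at hp0
  -- parameters
  obtain ⟨q0, hq0l, hq0u, hq0P⟩ := exists_q0 E
  have hq0pos : 0 < q0 := (ql_pos E).trans hq0l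
  have hq0mem : q0 ∈ Icc (0:ℝ) E.qbar := ⟨hq0pos.le, hq0u.le⟩
  set δ : ℝ := (E.qbar - q0) * (E.θl - E.Pl q0) with hδdef
  have hδ0 : 0 < δ := mul_pos (by linarith) (by linarith)
  clear_value δ
  set C0 : ℝ := E.θu + 1 - E.Pl E.qbar with hC0def
  have hC0 : 0 < C0 := by
    have := Pl_qbar_lt E
    have := E.θlu
    rw [hC0def]; linarith
  clear_value C0
  set η : ℝ := min 1 (δ / (4 * E.qbar)) with hηdef
  have hη0 : 0 < η := lt_min one_pos (div_pos hδ0 (by linarith [E.qbar_pos]))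
  have hηb : η * E.qbar ≤ δ / 4 := by
    have h1 : η ≤ δ / (4 * E.qbar) := min_le_right _ _
    have h2 : η * E.qbar ≤ (δ / (4 * E.qbar)) * E.qbar :=
      mul_le_mul_of_nonneg_right h1 E.qbar_pos.le
    have h3 : (δ / (4 * E.qbar)) * E.qbar = δ / 4 := by
      have hq : E.qbar ≠ 0 := ne_of_gt E.qbar_pos
      field_simp
    linarith
  clear_value η
  set c : ℝ := η / q0 with hcdef
  have hc0 : 0 < c := div_pos hη0 hq0pos
  have hceta : c * q0 = η := by rw [hcdef]; field_simp
  clear_value c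
  set K : ℝ := max ((E.θu + 1 - E.Pl E.qbar) / (E.qbar - q0)) (2 * C0 ^ 2 / δ) with hKdef
  have hK0 : 0 < K :=
    lt_of_lt_of_le (div_pos (by nlinarith [hC0]) hδ0) (le_max_right _ _)
  have hKa : E.θu - K * (E.qbar - q0) ≤ E.Pl E.qbar - 1 := by
    have h1 : (E.θu + 1 - E.Pl E.qbar) / (E.qbar - q0) ≤ K := le_max_left _ _
    rw [div_le_iff₀ (by linarith : (0:ℝ) < E.qbar - q0)] at h1
    nlinarith [h1]
  have hKb : C0 ^ 2 / K ≤ δ / 2 := by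
    have h1 : 2 * C0 ^ 2 / δ ≤ K := le_max_right _ _
    rw [div_le_iff₀ hδ0] at h1
    rw [div_le_iff₀ hK0]
    nlinarith [h1]
  clear_value K
  -- the adversarial inverse demand
  set M : ℝ → ℝ := fun s => if s ≤ q0 then E.θu + c * (q0 - s) else E.θu - K * (s - q0)
    with hMdef
  clear_value M
  have hMq0 : ∀ s, q0 ≤ s → M s ≤ E.θu := by
    intro s hs
    simp only [hMdef]
    by_cases h : s ≤ q0
    · have hsq : s = q0 := le_antisymm h hs
      rw [if_pos h, hsq]
      simp
    · rw [if_neg h]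
      push_neg at h
      nlinarith [mul_nonneg hK0.le (by linarith : (0:ℝ) ≤ s - q0)]
  have hMeta : ∀ s, 0 ≤ s → M s ≤ E.θu + η := by
    intro s hs
    simp only [hMdef]
    by_cases h : s ≤ q0
    · rw [if_pos h]
      have := mul_nonneg hc0.le hs
      nlinarith [hceta]
    · rw [if_neg h]
      push_neg at h
      nlinarith [mul_nonneg hK0.le (by linarith : (0:ℝ) ≤ s - q0), hη0]
  have hManti : StrictAnti M := by
    intro a b hab
    simp only [hMdef]
    by_cases hb : b ≤ q0
    · rw [if_pos hb, if_pos (hab.le.trans hb)]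
      nlinarith [mul_pos hc0 (by linarith : (0:ℝ) < b - a)]
    · rw [if_neg hb]
      push_neg at hb
      by_cases ha : a ≤ q0
      · rw [if_pos ha]
        nlinarith [mul_nonneg hc0.le (by linarith : (0:ℝ) ≤ q0 - a),
          mul_pos hK0 (by linarith : (0:ℝ) < b - q0)]
      · rw [if_neg ha]
        push_neg at ha
        nlinarith [mul_pos hK0 (by linarith : (0:ℝ) < b - a)]
  have hMcont : Continuous M := by
    rw [hMdef]
    apply Continuous.if_le
    · exact continuous_const.add (continuous_const.mul (continuous_const.sub continuous_id))
    · exact continuous_const.sub (continuous_const.mul (continuous_id.sub continuous_const))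
    · exact continuous_id
    · exact continuous_const
    · intro x hx
      rw [hx]
      ring
  set P : ℝ → ℝ := fun s => max (E.Pl s) (M s) with hPdef
  have hPanti : StrictAntiOn P (Icc 0 E.qbar) := by
    intro a ha b hb hab
    exact max_lt_max (E.Pl_anti ha hb hab) (hManti hab)
  have hPcont : ContinuousOn P (Icc 0 E.qbar) := by
    simp only [hPdef]
    exact fun x hx => (E.Pl_cont x hx).max (hMcont.continuousOn x hx)
  have hPge : ∀ s ∈ Icc (0:ℝ) E.qbar, E.Pl s ≤ P s := fun s _ => le_max_left _ _
  have hM0 : M 0 = E.θu + η := by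
    simp only [hMdef, if_pos hq0pos.le]
    rw [sub_zero, hceta]
  have hP0 : E.θu < P 0 := by
    have : E.θu < M 0 := by rw [hM0]; linarith
    exact lt_of_lt_of_le this (le_max_right _ _)
  have hMqbar : M E.qbar ≤ E.Pl E.qbar - 1 := by
    simp only [hMdef, if_neg (not_le.mpr hq0u)]
    linarith [hKa]
  have hPqbar : P E.qbar = E.Pl E.qbar := by
    simp only [hPdef]
    rw [max_eq_left (by linarith [hMqbar])]
  have hPθl : P E.qbar < E.θl := by rw [hPqbar]; exact Pl_qbar_lt E
  obtain ⟨Dm, hDm⟩ := exists_demand E P hPanti hPcont hPge hP0 hPθl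
  -- price facts
  have hpleθu := p_le_θu E p t hadm.2.1 hqtop
  have hPq0 : Dm.P q0 = E.θu := by
    rw [hDm]
    simp only [hPdef]
    have hM : M q0 = E.θu := by
      simp only [hMdef, if_pos (le_refl q0)]; ring
    rw [hM, max_eq_right (by linarith [hq0P, E.θlu])]
  have hyq0 : ∀ y ∈ E.Θ, q0 ≤ Dm.D (p y) := by
    intro y hy
    apply le_D Dm hq0mem
    rw [hPq0]
    exact hpleθu y hy
  have hDpθ0 : Dm.D (p θ0) = E.qbar := by
    apply D_eq_qbar Dm
    rw [hDm, hPqbar]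
    exact hp0
  -- rent lower bound
  have hrent : (E.θu - θ0) * q0 ≤ E.rent p t θ0 Dm := by
    have h1 := henv θ0 hθ0 Dm
    have h2 : 0 ≤ E.rent p t E.θu Dm := hadm.2.2 E.θu (theta_u_mem E) Dm
    have hint : IntervalIntegrable (fun y => Dm.D (p y)) volume θ0 E.θu := by
      apply AntitoneOn.intervalIntegrable
      apply (EPIC_g_anti E p t hadm.2.1 Dm).mono
      rw [uIcc_of_le hθ0.2]
      intro y hy
      exact ⟨hθ0.1.trans hy.1, hy.2⟩
    have h3 := const_le_integral hθ0.2 hint (fun y hy => hyq0 y ⟨hθ0.1.trans hy.1, hy.2⟩)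
    linarith [h1, h2, h3]
  -- integrability of P
  have hPint : ∀ {a b : ℝ}, a ∈ Icc (0:ℝ) E.qbar → b ∈ Icc (0:ℝ) E.qbar →
      IntervalIntegrable P volume a b := fun ha hb =>
    (hPcont.mono (uIcc_subset_Icc ha hb)).intervalIntegrable
  have hqlq0 : E.ql ≤ q0 := hq0l.le
  -- (vi-a)
  have hs1 : (∫ s in (0:ℝ)..E.ql, P s) ≤ E.Vl E.ql + E.ql * η := by
    have hb : (∫ s in (0:ℝ)..E.ql, P s) ≤ ∫ s in (0:ℝ)..E.ql, (E.Pl s + η) := by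
      apply intervalIntegral.integral_mono_on (ql_mem E).1 (hPint (zero_mem E) (ql_mem E))
        ((Pl_intInt E (zero_mem E) (ql_mem E)).add intervalIntegrable_const)
      intro s hs
      have hsm : s ∈ Icc (0:ℝ) E.qbar := ⟨hs.1, hs.2.trans (ql_mem E).2⟩
      have hPl_ge : E.θu ≤ E.Pl s := by
        rcases eq_or_lt_of_le hs.2 with h | h
        · rw [h, Pl_ql E]
        · rw [← Pl_ql E]; exact (E.Pl_anti hsm (ql_mem E) h).le
      have hMs : M s ≤ E.θu + η := hMeta s hs.1
      simp only [hPdef]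
      exact max_le (by linarith [hη0]) (by linarith)
    rw [intervalIntegral.integral_add (Pl_intInt E (zero_mem E) (ql_mem E))
      intervalIntegrable_const, intervalIntegral.integral_const] at hb
    rw [Env.Vl]
    simp only [smul_eq_mul, sub_zero] at hb
    linarith [hb]
  -- (vi-b)
  have hs2 : (∫ s in E.ql..q0, P s) ≤ (q0 - E.ql) * (E.θu + η) := by
    apply integral_le_const hqlq0 (hPint (ql_mem E) hq0mem)
    intro s hs
    have hsm : s ∈ Icc (0:ℝ) E.qbar := ⟨(ql_mem E).1.trans hs.1, hs.2.trans hq0mem.2⟩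
    have hPls : E.Pl s ≤ E.θu := by
      rcases eq_or_lt_of_le hs.1 with h | h
      · rw [← h, Pl_ql E]
      · rw [← Pl_ql E]; exact (E.Pl_anti (ql_mem E) hsm h).le
    have hMs : M s ≤ E.θu + η := hMeta s hsm.1
    simp only [hPdef]
    exact max_le (by linarith [hη0]) hMs
  -- (vi-c)
  have hs3 : (∫ s in q0..E.qbar, P s) ≤ (∫ s in q0..E.qbar, E.Pl s) + C0 ^ 2 / K := by
    have hPleq : ∀ s ∈ Icc q0 E.qbar, P s ≤ E.Pl s + C0 := by
      intro s hs
      have hsm : s ∈ Icc (0:ℝ) E.qbar := ⟨hq0pos.le.trans hs.1, hs.2⟩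
      have hM := hMq0 s hs.1
      have hPl_ge : E.Pl E.qbar ≤ E.Pl s := by
        rcases eq_or_lt_of_le hs.2 with h | h
        · rw [h]
        · exact (E.Pl_anti hsm (qbar_mem E) h).le
      simp only [hPdef]
      refine max_le (by linarith [hC0]) ?_
      rw [hC0def]
      linarith [hM]
    set w : ℝ := C0 / K with hwdef
    have hw0 : 0 < w := div_pos hC0 hK0
    have hwC0 : w * C0 = C0 ^ 2 / K := by
      rw [hwdef, div_mul_eq_mul_div]; ring_nf
    have hKw : K * w = C0 := by
      rw [hwdef, mul_div_assoc', mul_comm, mul_div_assoc, div_self (ne_of_gt hK0), mul_one]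
    clear_value w
    by_cases hqw : q0 + w ≤ E.qbar
    · set m : ℝ := q0 + w with hmdef
      have hmmem : m ∈ Icc (0:ℝ) E.qbar := ⟨by linarith [hq0pos, hw0], hqw⟩
      have hsplit : (∫ s in q0..E.qbar, P s) =
          (∫ s in q0..m, P s) + ∫ s in m..E.qbar, P s :=
        (intervalIntegral.integral_add_adjacent_intervals (hPint hq0mem hmmem)
          (hPint hmmem (qbar_mem E))).symm
      have hb1 : (∫ s in q0..m, P s) ≤ (∫ s in q0..m, E.Pl s) + w * C0 := by
        have := intervalIntegral.integral_mono_on (by linarith [hw0] : q0 ≤ m)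
          (hPint hq0mem hmmem)
          ((Pl_intInt E hq0mem hmmem).add intervalIntegrable_const)
          (fun s hs => hPleq s ⟨hs.1, hs.2.trans hmmem.2⟩)
        rw [intervalIntegral.integral_add (Pl_intInt E hq0mem hmmem)
          intervalIntegrable_const, intervalIntegral.integral_const] at this
        simp only [smul_eq_mul] at this
        have hmq : m - q0 = w := by rw [hmdef]; ring
        rw [hmq] at this
        linarith [this]
      have hb2 : (∫ s in m..E.qbar, P s) = ∫ s in m..E.qbar, E.Pl s := by
        apply intervalIntegral.integral_congr
        intro s hs
        rw [uIcc_of_le hmmem.2] at hs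
        have hsm : s ∈ Icc (0:ℝ) E.qbar := ⟨hmmem.1.trans hs.1, hs.2⟩
        have hMs : M s ≤ E.Pl s := by
          have h1 : ¬ (s ≤ q0) := not_le.mpr (by linarith [hs.1, hw0])
          simp only [hMdef, if_neg h1]
          have h2 : w ≤ s - q0 := by linarith [hs.1]
          have h3 : K * w ≤ K * (s - q0) := mul_le_mul_of_nonneg_left h2 hK0.le
          have h4 : K * w = C0 := hKw
          have hPl_ge : E.Pl E.qbar ≤ E.Pl s := by
            rcases eq_or_lt_of_le hs.2 with h | h
            · rw [h]
            · exact (E.Pl_anti hsm (qbar_mem E) h).le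
          rw [hC0def] at h4
          linarith
        simp only [hPdef]
        exact max_eq_left hMs
      have hrecomb : (∫ s in q0..m, E.Pl s) + (∫ s in m..E.qbar, E.Pl s) =
          ∫ s in q0..E.qbar, E.Pl s :=
        intervalIntegral.integral_add_adjacent_intervals (Pl_intInt E hq0mem hmmem)
          (Pl_intInt E hmmem (qbar_mem E))
      rw [hsplit, hb2]
      rw [← hwC0]
      linarith [hb1, hrecomb.le, hrecomb.ge]
    · push_neg at hqw
      have hb := intervalIntegral.integral_mono_on hq0u.le (hPint hq0mem (qbar_mem E))
        ((Pl_intInt E hq0mem (qbar_mem E)).add intervalIntegrable_const) hPleq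
      rw [intervalIntegral.integral_add (Pl_intInt E hq0mem (qbar_mem E))
        intervalIntegrable_const, intervalIntegral.integral_const] at hb
      simp only [smul_eq_mul] at hb
      have : (E.qbar - q0) * C0 ≤ w * C0 := by
        apply mul_le_mul_of_nonneg_right (by linarith) hC0.le
      rw [← hwC0]
      linarith [hb, this]
  -- the integral of Pl on [q0, qbar]
  have hs4 : (∫ s in q0..E.qbar, E.Pl s) - θ0 * (E.qbar - q0) ≤ -δ := by
    have hb : (∫ s in q0..E.qbar, E.Pl s) ≤ (E.qbar - q0) * E.Pl q0 := by
      apply integral_le_const hq0u.le (Pl_intInt E hq0mem (qbar_mem E))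
      intro s hs
      rcases eq_or_lt_of_le hs.1 with h | h
      · rw [← h]
      · exact (E.Pl_anti hq0mem ⟨hq0pos.le.trans hs.1, hs.2⟩ h).le
    have hθ0l : E.θl ≤ θ0 := hθ0.1
    rw [hδdef]
    nlinarith [hb, mul_nonneg (by linarith : (0:ℝ) ≤ E.qbar - q0) (by linarith : (0:ℝ) ≤ θ0 - E.θl)]
  -- welfare upper bound and contradiction
  have hwt := hd θ0 hθ0 Dm
  rw [Env.wt, hDpθ0] at hwt
  have hVsplit : Dm.V E.qbar = (∫ s in (0:ℝ)..E.ql, P s) + (∫ s in E.ql..q0, P s) +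
      ∫ s in q0..E.qbar, P s := by
    rw [Demand.V, hDm]
    rw [← intervalIntegral.integral_add_adjacent_intervals (hPint (zero_mem E) hq0mem)
      (hPint hq0mem (qbar_mem E))]
    rw [← intervalIntegral.integral_add_adjacent_intervals (hPint (zero_mem E) (ql_mem E))
      (hPint (ql_mem E) hq0mem)]
  have hGdef : E.Gstar = E.Vl E.ql - E.θu * E.ql := rfl
  have hexp : (q0 - E.ql) * (E.θu + η) = q0 * E.θu + q0 * η - E.ql * E.θu - E.ql * η := by
    ring
  rw [hexp] at hs2
  have hηq0 : η * q0 ≤ δ / 4 := by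
    nlinarith [hηb, mul_nonneg hη0.le (by linarith [hq0u] : (0:ℝ) ≤ E.qbar - q0)]
  have hrent' : E.θu * q0 - θ0 * q0 ≤ E.rent p t θ0 Dm := by nlinarith [hrent]
  nlinarith [hwt, hVsplit, hs1, hs2, hs3, hs4, hηq0, hrent', hδ0, hKb]

end PSLAux7

namespace PSLAux8

open PSLAux PSLAux2 PSLAux3 PSLAux4 PSLAux5 PSLAux6 PSLAux7 MeasureTheory intervalIntegral

variable {E : Env}

/-- Step 2: necessity of monotonicity. -/
lemma nec_monotone (E : Env) (p : ℝ → ℝ) (t : ℝ → Demand E → ℝ)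
    (hadm : E.IsAdmissiblePR p t)
    (henv : ∀ θ ∈ E.Θ, ∀ D : Demand E,
      E.rent p t θ D = E.rent p t E.θu D + ∫ y in θ..E.θu, D.D (p y))
    (hd : ∀ θ ∈ E.Θ, ∀ D : Demand E, E.Gstar ≤ E.wt p t θ D)
    (hqtop : E.Dl (p E.θu) = E.ql) :
    MonotoneOn p E.Θ := by
  intro θ1 h1 θ2 h2 h12
  by_contra hcon
  push_neg at hcon
  have hgt2 : E.Pl E.qbar < p θ2 := p_gt_Plqbar E p t hadm henv hd hqtop θ2 h2
  have hganti := EPIC_g_anti E p t hadm.2.1 E.DlDemand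
  have ha1 : E.Dl (p θ2) ≤ E.Dl (p θ1) := hganti h1 h2 h12
  have ha2 : E.Dl (p θ1) ≤ E.Dl (p θ2) := D_anti E.DlDemand hcon.le
  have heq : E.Dl (p θ1) = E.Dl (p θ2) := le_antisymm ha2 ha1
  by_cases hcase : p θ1 ≤ E.Pl 0
  · -- both prices in the invertible range: contradiction with injectivity
    have hi1 := (E.Dl_inv (p θ1) (le_of_lt (hgt2.trans hcon)) hcase).2
    have hi2 := (E.Dl_inv (p θ2) hgt2.le (le_of_lt (lt_of_lt_of_le hcon hcase))).2
    rw [heq, hi2] at hi1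
    exact absurd hi1 (ne_of_lt hcon)
  · -- p θ1 above the choke price: quantity zero, welfare violation at θ2
    push_neg at hcase
    have h0 : E.Dl (p θ1) = 0 := E.Dl_high _ hcase
    rw [h0] at heq
    have hwt := hd θ2 h2 E.DlDemand
    rw [Env.wt, DlDemand_V E, DlDemand_D E, ← heq] at hwt
    have hV0 : E.Vl 0 = 0 := by rw [Env.Vl, intervalIntegral.integral_same]
    rw [hV0] at hwt
    have hrent := hadm.2.2 θ2 h2 E.DlDemand
    have := Gstar_pos E
    nlinarith [hwt, hrent]

end PSLAux8

namespace PSLMain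

open PSLAux PSLAux2 PSLAux3 PSLAux4 PSLAux5 PSLAux6 PSLAux7 PSLAux8 MeasureTheory

/-- assembled characterization -/
theorem main (E : Env) :
    (∀ (p : ℝ → ℝ) (t : ℝ → Demand E → ℝ), E.IsAdmissiblePR p t → E.Gt p t ≤ E.Gstar) ∧
    (∃ (p : ℝ → ℝ) (t : ℝ → Demand E → ℝ), E.IsAdmissiblePR p t ∧ E.Gt p t = E.Gstar) ∧
    (∀ (p : ℝ → ℝ) (t : ℝ → Demand E → ℝ), E.IsAdmissiblePR p t →
      (E.PriceShortList p t ↔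
        (MonotoneOn p E.Θ ∧
          ((∀ θ ∈ E.Θ, ∀ D : Demand E,
              E.rent p t θ D = E.rent p t E.θu D + ∫ y in θ..E.θu, D.D (p y)) ∧
            (∀ D : Demand E, 0 ≤ E.rent p t E.θu D) ∧
            E.rent p t E.θu E.DlDemand = 0) ∧
          p E.θu = E.θu ∧
          ∀ θ ∈ E.Θ, ∀ D : Demand E, E.Gstar ≤ E.wt p t θ D))) := by
  refine ⟨fun p t h => claimA E p t h,
    ⟨pB E, tB E, claimB_admissible E, claimB_Gt E⟩, fun p t hadm => ?_⟩
  constructor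
  · -- necessity
    intro hsl
    have hGt : E.Gstar ≤ E.Gt p t := by
      have := hsl.2 (pB E) (tB E) (claimB_admissible E)
      rw [claimB_Gt E] at this
      exact this
    have hd := nec_d E p t hGt
    obtain ⟨hrent0, hq, hptop⟩ := nec_top E p t hadm hd
    have henv : ∀ θ ∈ E.Θ, ∀ D : Demand E,
        E.rent p t θ D = E.rent p t E.θu D + ∫ y in θ..E.θu, D.D (p y) :=
      fun θ hθ D => envelope E p t hadm.2.1 hθ D
    exact ⟨nec_monotone E p t hadm henv hd hq, ⟨henv,
      fun D => hadm.2.2 E.θu (theta_u_mem E) D, hrent0⟩, hptop, hd⟩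
  · -- sufficiency
    rintro ⟨ha, ⟨hb, _, _⟩, _, hd⟩
    refine ⟨hadm, fun p' t' hadm' => ?_⟩
    have hlb : E.Gstar ≤ E.Gt p t := by
      apply le_csInf
      · exact ⟨E.Wt p t E.DlDemand (Measure.dirac E.θu),
          E.DlDemand, Measure.dirac E.θu, tech_dirac E (theta_u_mem E), rfl⟩
      · rintro w ⟨D, μ, htech, rfl⟩
        exact core_lb E p t ha hb hd D μ htech
    exact (claimA E p' t' hadm').trans hlb

end PSLMain

/-- Lemma (short list of price regulations): every EPIC and EPIR price regulation has
guarantee at most `G*`, the maximum guarantee `G*` is attained, and an EPIC and EPIR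
price regulation is in the price short list iff conditions (a)–(d) hold. -/
theorem priceShortList_characterization (E : Env) :
    (∀ (p : ℝ → ℝ) (t : ℝ → Demand E → ℝ), E.IsAdmissiblePR p t → E.Gt p t ≤ E.Gstar) ∧
    (∃ (p : ℝ → ℝ) (t : ℝ → Demand E → ℝ), E.IsAdmissiblePR p t ∧ E.Gt p t = E.Gstar) ∧
    (∀ (p : ℝ → ℝ) (t : ℝ → Demand E → ℝ), E.IsAdmissiblePR p t →
      (E.PriceShortList p t ↔
        (MonotoneOn p E.Θ ∧
          ((∀ θ ∈ E.Θ, ∀ D : Demand E,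
              E.rent p t θ D = E.rent p t E.θu D + ∫ y in θ..E.θu, D.D (p y)) ∧
            (∀ D : Demand E, 0 ≤ E.rent p t E.θu D) ∧
            E.rent p t E.θu E.DlDemand = 0) ∧
          p E.θu = E.θu ∧
          ∀ θ ∈ E.Θ, ∀ D : Demand E, E.Gstar ≤ E.wt p t θ D))) := by
  exact PSLMain.main E
end
end

section
/- The maximal welfare guarantee over all EPIC and EPIR price regulations equals the maximal welfare guarantee over all IC and IR quantity mechanisms, and both equal G* = V̲(q_ℓ) − θ̄·q_ℓ. -/
open MeasureTheory Set

noncomputable section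

/-! ### Auxiliary lemmas -/

namespace Aux

variable {E : Env}

lemma theta_u_mem (E : Env) : E.θu ∈ E.Θ := ⟨E.θlu.le, le_rfl⟩

lemma theta_u_pos (E : Env) : 0 < E.θu := E.θl_pos.trans E.θlu

/-- Any demand takes values in `[0, qbar]`. -/
lemma D_mem (D : Demand E) (p : ℝ) : D.D p ∈ Icc (0:ℝ) E.qbar := by
  by_cases h1 : p < D.P E.qbar
  · rw [D.D_low p h1]; exact ⟨E.qbar_pos.le, le_rfl⟩
  by_cases h2 : D.P 0 < p
  · rw [D.D_high p h2]; exact ⟨le_rfl, E.qbar_pos.le⟩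
  push_neg at h1 h2
  exact (D.D_inv p h1 h2).1

lemma intIntOn {P : ℝ → ℝ} (hc : ContinuousOn P (Icc 0 E.qbar)) {a b : ℝ}
    (ha : a ∈ Icc (0:ℝ) E.qbar) (hb : b ∈ Icc (0:ℝ) E.qbar) :
    IntervalIntegrable P volume a b := by
  have h0q : (0:ℝ) ≤ E.qbar := E.qbar_pos.le
  have hsub : uIcc a b ⊆ Icc 0 E.qbar := by
    rw [← uIcc_of_le h0q]
    exact uIcc_subset_uIcc (by rwa [uIcc_of_le h0q]) (by rwa [uIcc_of_le h0q])
  exact (hc.mono hsub).intervalIntegrable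

lemma intInt (D : Demand E) {a b : ℝ} (ha : a ∈ Icc (0:ℝ) E.qbar)
    (hb : b ∈ Icc (0:ℝ) E.qbar) : IntervalIntegrable D.P volume a b :=
  intIntOn D.P_cont ha hb

/-- Key optimality lemma: `x ↦ ∫_0^x P − θu·x` is maximized at `x = D(θu)`. -/
lemma key (D : Demand E) {x : ℝ} (hx : x ∈ Icc (0:ℝ) E.qbar) :
    (∫ s in (0:ℝ)..x, D.P s) - E.θu * x ≤
      (∫ s in (0:ℝ)..(D.D E.θu), D.P s) - E.θu * (D.D E.θu) := by
  set d := D.D E.θu with hd_def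
  have hθuP0 : E.θu ≤ D.P 0 := D.P0.le
  have hd : d ∈ Icc (0:ℝ) E.qbar := D_mem D E.θu
  have hanti := D.P_anti.antitoneOn
  rcases le_or_gt x d with hxd | hdx
  · -- ∫_x^d P ≥ θu (d − x)
    have hge : ∀ s ∈ Icc x d, E.θu ≤ D.P s := by
      intro s hs
      have hs' : s ∈ Icc (0:ℝ) E.qbar := ⟨hx.1.trans hs.1, hs.2.trans hd.2⟩
      by_cases hc : D.P E.qbar ≤ E.θu
      · have hPd : D.P d = E.θu := (D.D_inv E.θu hc hθuP0).2
        calc E.θu = D.P d := hPd.symm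
          _ ≤ D.P s := hanti hs' hd hs.2
      · push_neg at hc
        calc E.θu ≤ D.P E.qbar := hc.le
          _ ≤ D.P s := hanti hs' ⟨E.qbar_pos.le, le_rfl⟩ hs'.2
    have hi1 : IntervalIntegrable D.P volume x d := intInt D hx hd
    have hmono : (∫ s in x..d, (fun _ => E.θu) s) ≤ ∫ s in x..d, D.P s :=
      intervalIntegral.integral_mono_on hxd intervalIntegrable_const hi1 hge
    rw [intervalIntegral.integral_const, smul_eq_mul] at hmono
    have hsplit : (∫ s in (0:ℝ)..x, D.P s) + ∫ s in x..d, D.P s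
        = ∫ s in (0:ℝ)..d, D.P s :=
      intervalIntegral.integral_add_adjacent_intervals
        (intInt D ⟨le_rfl, E.qbar_pos.le⟩ hx) hi1
    nlinarith [hmono, hsplit]
  · -- d < x : then `P(qbar) ≤ θu`, and ∫_d^x P ≤ θu (x − d)
    have hc : D.P E.qbar ≤ E.θu := by
      by_contra hc
      push_neg at hc
      have : d = E.qbar := D.D_low E.θu hc
      exact absurd hx.2 (by rw [← this]; exact not_le.mpr hdx)
    have hPd : D.P d = E.θu := (D.D_inv E.θu hc hθuP0).2
    have hle : ∀ s ∈ Icc d x, D.P s ≤ E.θu := by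
      intro s hs
      have hs' : s ∈ Icc (0:ℝ) E.qbar := ⟨hd.1.trans hs.1, hs.2.trans hx.2⟩
      calc D.P s ≤ D.P d := hanti hd hs' hs.1
        _ = E.θu := hPd
    have hi1 : IntervalIntegrable D.P volume d x := intInt D hd hx
    have hmono : (∫ s in d..x, D.P s) ≤ ∫ s in d..x, (fun _ => E.θu) s :=
      intervalIntegral.integral_mono_on hdx.le hi1 intervalIntegrable_const hle
    rw [intervalIntegral.integral_const, smul_eq_mul] at hmono
    have hsplit : (∫ s in (0:ℝ)..d, D.P s) + ∫ s in d..x, D.P s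
        = ∫ s in (0:ℝ)..x, D.P s :=
      intervalIntegral.integral_add_adjacent_intervals
        (intInt D ⟨le_rfl, E.qbar_pos.le⟩ hd) hi1
    nlinarith [hmono, hsplit]

lemma ql_mem (E : Env) : E.ql ∈ Icc (0:ℝ) E.qbar := D_mem E.DlDemand E.θu

/-- `V̲(x) − θu x ≤ G*` for all feasible `x`. -/
lemma Vl_le_Gstar (E : Env) {x : ℝ} (hx : x ∈ Icc (0:ℝ) E.qbar) :
    E.Vl x - E.θu * x ≤ E.Gstar :=
  key E.DlDemand hx

lemma Gstar_nonneg (E : Env) : 0 ≤ E.Gstar := by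
  have := Vl_le_Gstar E (x := 0) ⟨le_rfl, E.qbar_pos.le⟩
  simpa [Env.Vl] using this

/-- For any demand `D ∈ 𝒟`, `V_D(D(θu)) − θu·D(θu) ≥ G*`. -/
lemma Gstar_le_surplus (D : Demand E) :
    E.Gstar ≤ D.V (D.D E.θu) - E.θu * (D.D E.θu) := by
  have hql := ql_mem E
  have h1 : (∫ s in (0:ℝ)..E.ql, E.Pl s) ≤ ∫ s in (0:ℝ)..E.ql, D.P s := by
    refine intervalIntegral.integral_mono_on hql.1
      (intInt E.DlDemand ⟨le_rfl, E.qbar_pos.le⟩ hql)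
      (intInt D ⟨le_rfl, E.qbar_pos.le⟩ hql) ?_
    intro s hs
    exact D.P_ge s ⟨hs.1, hs.2.trans hql.2⟩
  have h2 := key D hql
  have hG : E.Gstar = E.Vl E.ql - E.θu * E.ql := rfl
  have hV : E.Vl E.ql = ∫ s in (0:ℝ)..E.ql, E.Pl s := rfl
  have hVD : ∀ y, D.V y = ∫ s in (0:ℝ)..y, D.P s := fun _ => rfl
  rw [hG, hV, hVD]
  linarith [h2, h1, (hVD E.ql) ▸ h2]

/-- The Dirac measure at `θu` is an admissible technology. -/
lemma tech_dirac (E : Env) : E.IsTech (Measure.dirac E.θu) := by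
  constructor
  · infer_instance
  · rw [Env.Θ, Measure.dirac_apply' _ (measurableSet_Icc (a := E.θl) (b := E.θu)).compl]
    exact indicator_of_notMem (by simp [E.θlu.le]) 1

lemma Vl_isValue (E : Env) : E.IsValue E.Vl :=
  ⟨E.Pl, E.Pl_anti, E.Pl_cont, fun _ _ => le_rfl, fun _ => rfl⟩

/-- Any admissible value dominates `V̲` at `q_ℓ`. -/
lemma Vl_ql_le {V : ℝ → ℝ} (hV : E.IsValue V) : E.Vl E.ql ≤ V E.ql := by
  obtain ⟨P, _, hcont, hge, hVeq⟩ := hV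
  have hql := ql_mem E
  rw [hVeq E.ql]
  refine intervalIntegral.integral_mono_on hql.1
    (intIntOn E.Pl_cont ⟨le_rfl, E.qbar_pos.le⟩ hql)
    (intIntOn hcont ⟨le_rfl, E.qbar_pos.le⟩ hql) ?_
  intro s hs
  exact hge s ⟨hs.1, hs.2.trans hql.2⟩

end Aux

/-- Corollary (equivalence under worst-case optimality): the maximal guarantee over all
EPIC and EPIR price regulations and the maximal guarantee over all IC and IR quantity
mechanisms are both attained and equal to `G*`. -/
theorem max_guarantee_price_eq_quantity (E : Env) :
    IsGreatest {g : ℝ | ∃ (p : ℝ → ℝ) (t : ℝ → Demand E → ℝ),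
        E.IsAdmissiblePR p t ∧ g = E.Gt p t} E.Gstar ∧
      IsGreatest {g : ℝ | ∃ q u : ℝ → ℝ, E.IsMech q u ∧ g = E.G q u} E.Gstar := by
  have hθuΘ : E.θu ∈ E.Θ := Aux.theta_u_mem E
  have hθu_pos : 0 < E.θu := Aux.theta_u_pos E
  constructor
  · -- price regulations
    constructor
    · -- G* is attained by the constant price cap `p = θu`, `t = θu·D(θu)`
      refine ⟨fun _ => E.θu, fun _ D => E.θu * D.D E.θu, ⟨⟨fun _ _ => hθu_pos.le,
        fun θ _ D => mul_nonneg hθu_pos.le (Aux.D_mem D E.θu).1⟩,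
        fun θ _ θ' _ D => le_rfl, fun θ hθ D => ?_⟩, ?_⟩
      · -- EPIR
        have h1 : θ ≤ E.θu := hθ.2
        have h2 : 0 ≤ D.D E.θu := (Aux.D_mem D E.θu).1
        simp only [Env.rent]
        nlinarith
      · -- the guarantee equals G*
        have hWt : ∀ (D : Demand E) (μ : Measure ℝ), E.IsTech μ →
            E.Wt (fun _ => E.θu) (fun _ D => E.θu * D.D E.θu) D μ
              = D.V (D.D E.θu) - E.θu * D.D E.θu := by
          intro D μ hμ
          have hconst : (fun θ => E.wt (fun _ => E.θu) (fun _ D => E.θu * D.D E.θu) θ D)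
              = fun _ => D.V (D.D E.θu) - E.θu * D.D E.θu := by
            funext θ; simp only [Env.wt, Env.rent]; ring
          have := hμ.1
          rw [Env.Wt, hconst, integral_const, probReal_univ, one_smul]
        refine le_antisymm ?_ ?_
        · refine le_csInf ⟨E.Gstar, E.DlDemand, Measure.dirac E.θu, Aux.tech_dirac E, ?_⟩ ?_
          · rw [hWt E.DlDemand _ (Aux.tech_dirac E)]; rfl
          · rintro w ⟨D, μ, hμ, rfl⟩
            rw [hWt D μ hμ]
            exact Aux.Gstar_le_surplus D
        · refine csInf_le ⟨E.Gstar, ?_⟩ ⟨E.DlDemand, Measure.dirac E.θu, Aux.tech_dirac E, ?_⟩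
          · rintro w ⟨D, μ, hμ, rfl⟩
            rw [hWt D μ hμ]
            exact Aux.Gstar_le_surplus D
          · rw [hWt E.DlDemand _ (Aux.tech_dirac E)]; rfl
    · -- upper bound: any admissible price regulation has guarantee ≤ G*
      rintro g ⟨p, t, ⟨hpr, hic, hir⟩, rfl⟩
      rw [Env.Gt]
      by_cases hbdd : BddBelow {w : ℝ | ∃ (D : Demand E) (μ : Measure ℝ),
          E.IsTech μ ∧ w = E.Wt p t D μ}
      · have hmem : E.Wt p t E.DlDemand (Measure.dirac E.θu) ∈ {w : ℝ |
            ∃ (D : Demand E) (μ : Measure ℝ), E.IsTech μ ∧ w = E.Wt p t D μ} :=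
          ⟨E.DlDemand, Measure.dirac E.θu, Aux.tech_dirac E, rfl⟩
        refine (csInf_le hbdd hmem).trans ?_
        rw [Env.Wt, integral_dirac]
        have hrent : 0 ≤ E.rent p t E.θu E.DlDemand := hir E.θu hθuΘ E.DlDemand
        have hVle : E.Vl (E.Dl (p E.θu)) - E.θu * E.Dl (p E.θu) ≤ E.Gstar :=
          Aux.Vl_le_Gstar E (Aux.D_mem E.DlDemand (p E.θu))
        have : E.wt p t E.θu E.DlDemand
            = E.Vl (E.Dl (p E.θu)) - E.θu * E.Dl (p E.θu) - E.rent p t E.θu E.DlDemand := rfl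
        rw [this]
        linarith
      · rw [Real.sInf_of_not_bddBelow hbdd]
        exact Aux.Gstar_nonneg E
  · -- quantity mechanisms
    constructor
    · -- G* is attained by the constant mechanism `q = q_ℓ`, `u θ = (θu − θ) q_ℓ`
      refine ⟨fun _ => E.ql, fun θ => (E.θu - θ) * E.ql, ⟨⟨antitoneOn_const,
        fun θ _ => Aux.ql_mem E⟩, by simp, fun θ _ => ?_⟩, ?_⟩
      · rw [intervalIntegral.integral_const, smul_eq_mul]; ring
      · -- the guarantee equals G*
        have hW : ∀ (V : ℝ → ℝ) (μ : Measure ℝ), E.IsTech μ →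
            E.W (fun _ => E.ql) (fun θ => (E.θu - θ) * E.ql) V μ
              = V E.ql - E.θu * E.ql := by
          intro V μ hμ
          have hconst : (fun θ => V ((fun _ => E.ql) θ) - θ * (fun _ => E.ql) θ -
              (E.θu - θ) * E.ql) = fun _ => V E.ql - E.θu * E.ql := by
            funext θ; ring
          have := hμ.1
          rw [Env.W, hconst, integral_const, probReal_univ, one_smul]
        have hbound : ∀ w ∈ {w : ℝ | ∃ (V : ℝ → ℝ) (μ : Measure ℝ),
            E.IsValue V ∧ E.IsTech μ ∧ w = E.W (fun _ => E.ql)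
              (fun θ => (E.θu - θ) * E.ql) V μ}, E.Gstar ≤ w := by
          rintro w ⟨V, μ, hV, hμ, rfl⟩
          rw [hW V μ hμ]
          have := Aux.Vl_ql_le hV
          have hG : E.Gstar = E.Vl E.ql - E.θu * E.ql := rfl
          linarith
        have hmem : E.Gstar ∈ {w : ℝ | ∃ (V : ℝ → ℝ) (μ : Measure ℝ),
            E.IsValue V ∧ E.IsTech μ ∧ w = E.W (fun _ => E.ql)
              (fun θ => (E.θu - θ) * E.ql) V μ} :=
          ⟨E.Vl, Measure.dirac E.θu, Aux.Vl_isValue E, Aux.tech_dirac E,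
            by rw [hW E.Vl _ (Aux.tech_dirac E)]; rfl⟩
        exact le_antisymm (le_csInf ⟨E.Gstar, hmem⟩ hbound)
          (csInf_le ⟨E.Gstar, hbound⟩ hmem)
    · -- upper bound: any IC and IR mechanism has guarantee ≤ G*
      rintro g ⟨q, u, ⟨⟨hanti, hrange⟩, hu0, hu⟩, rfl⟩
      rw [Env.G]
      by_cases hbdd : BddBelow {w : ℝ | ∃ (V : ℝ → ℝ) (μ : Measure ℝ),
          E.IsValue V ∧ E.IsTech μ ∧ w = E.W q u V μ}
      · have hmem : E.W q u E.Vl (Measure.dirac E.θu) ∈ {w : ℝ |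
            ∃ (V : ℝ → ℝ) (μ : Measure ℝ), E.IsValue V ∧ E.IsTech μ ∧ w = E.W q u V μ} :=
          ⟨E.Vl, Measure.dirac E.θu, Aux.Vl_isValue E, Aux.tech_dirac E, rfl⟩
        refine (csInf_le hbdd hmem).trans ?_
        rw [Env.W, integral_dirac]
        have hVle : E.Vl (q E.θu) - E.θu * q E.θu ≤ E.Gstar :=
          Aux.Vl_le_Gstar E (hrange E.θu hθuΘ)
        linarith
      · rw [Real.sInf_of_not_bddBelow hbdd]
        exact Aux.Gstar_nonneg E
end
end
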